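/- arXiv:2505.04125 — 6 statements merged into one kernel-verified Lean document; each statement's English description precedes it below -/
import Mathlib

section
/- Let p be an odd prime, G a finite non-abelian p-group, and N a normal subgroup of G with C_G(N) ≤ N. Suppose d(Z(G)) < m and the quotient of Der(G/N, Ω₁(Z(N))) by Ider(G/N, Ω₁(Z(N))) is an elementary abelian p-group of order p^m. Then G has a non-inner automorphism of order p. -/
/-!  `Ω₁(Z(N))` and the group `Der(G/N, Ω₁(Z(N)))` of derivations. -/

/-- `Ω₁(Z(N)) = ⟨g ∈ Z(N) : g^p = 1⟩` as a subgroup of `G`, where `Z(N) = C_G(N) ⊓ N`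
is the center of the subgroup `N` viewed inside `G`. -/
def omegaOneCenterOf {G : Type*} [Group G] (p : ℕ) (N : Subgroup G) : Subgroup G :=
  Subgroup.closure {g : G | g ∈ Subgroup.centralizer (N : Set G) ⊓ N ∧ g ^ p = 1}

lemma omegaOneCenterOf_le {G : Type*} [Group G] (p : ℕ) (N : Subgroup G) :
    omegaOneCenterOf p N ≤ Subgroup.centralizer (N : Set G) ⊓ N :=
  (Subgroup.closure_le _).mpr fun _ hg => hg.1

lemma omegaOneCenterOf_comm {G : Type*} [Group G] {p : ℕ} {N : Subgroup G} {a b : G}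
    (ha : a ∈ omegaOneCenterOf p N) (hb : b ∈ omegaOneCenterOf p N) : a * b = b * a := by
  have ha' := omegaOneCenterOf_le p N ha
  have hb' := omegaOneCenterOf_le p N hb
  exact (Subgroup.mem_centralizer_iff.mp ha'.1 b hb'.2).symm

lemma omegaOneCenterOf_conj {G : Type*} [Group G] {p : ℕ} {N : Subgroup G} (hN : N.Normal)
    {w : G} (hw : w ∈ omegaOneCenterOf p N) (y : G) :
    y⁻¹ * w * y ∈ omegaOneCenterOf p N := by
  induction hw using Subgroup.closure_induction with
  | mem s hs =>
    refine Subgroup.subset_closure ⟨Subgroup.mem_inf.mpr ⟨?_, ?_⟩, ?_⟩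
    · rw [Subgroup.mem_centralizer_iff]
      intro n hn
      have h1 : y * n * y⁻¹ ∈ N := by
        have := hN.conj_mem n hn y
        simpa [mul_assoc] using this
      have h2 := Subgroup.mem_centralizer_iff.mp hs.1.1 (y * n * y⁻¹) h1
      have h3 : n * (y⁻¹ * s * y) = y⁻¹ * (y * n * y⁻¹ * s) * y := by group
      rw [h3, h2]; group
    · have := hN.conj_mem s hs.1.2 y⁻¹
      simpa using this
    · have h4 : (y⁻¹ * s * y) ^ p = y⁻¹ * s ^ p * y := by
        have := conj_pow (a := y⁻¹) (b := s) (i := p)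
        simpa using this
      rw [h4, hs.2]; group
  | one => simpa using one_mem _
  | mul a b _ _ iha ihb =>
    have h : y⁻¹ * (a * b) * y = (y⁻¹ * a * y) * (y⁻¹ * b * y) := by group
    rw [h]; exact mul_mem iha ihb
  | inv a _ iha =>
    have h : y⁻¹ * a⁻¹ * y = (y⁻¹ * a * y)⁻¹ := by group
    rw [h]; exact inv_mem iha

/-- The group `Der(G/N, Ω₁(Z(N)))` of derivations `δ : G → Ω₁(Z(N))` for the
conjugation action (`δ(xy) = δ(x)^y · δ(y)`, `h^y = y⁻¹hy`) which vanish on `N`, as a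
subgroup of the group `G → G` under pointwise multiplication. -/
def DerOmega {G : Type*} [Group G] (p : ℕ) (N : Subgroup G) (hN : N.Normal) :
    Subgroup (G → G) where
  carrier := {δ | (∀ g : G, δ g ∈ omegaOneCenterOf p N) ∧
    (∀ x y : G, δ (x * y) = y⁻¹ * δ x * y * δ y) ∧ (∀ n ∈ N, δ n = 1)}
  one_mem' := ⟨fun _ => one_mem _, by intro x y; simp, fun _ _ => rfl⟩
  mul_mem' := by
    rintro δ₁ δ₂ ⟨ha₁, hd₁, hv₁⟩ ⟨ha₂, hd₂, hv₂⟩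
    refine ⟨fun g => mul_mem (ha₁ g) (ha₂ g), ?_, fun n hn => by
      show δ₁ n * δ₂ n = 1
      rw [hv₁ n hn, hv₂ n hn, one_mul]⟩
    intro x y
    show δ₁ (x * y) * δ₂ (x * y) = y⁻¹ * (δ₁ x * δ₂ x) * y * (δ₁ y * δ₂ y)
    rw [hd₁ x y, hd₂ x y]
    have hc : δ₁ y * (y⁻¹ * δ₂ x * y) = (y⁻¹ * δ₂ x * y) * δ₁ y :=
      omegaOneCenterOf_comm (ha₁ y) (omegaOneCenterOf_conj hN (ha₂ x) y)
    have h : y⁻¹ * δ₁ x * y * δ₁ y * (y⁻¹ * δ₂ x * y * δ₂ y)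
        = y⁻¹ * δ₁ x * y * (δ₁ y * (y⁻¹ * δ₂ x * y)) * δ₂ y := by group
    rw [h, hc]; group
  inv_mem' := by
    rintro δ ⟨ha, hd, hv⟩
    refine ⟨fun g => inv_mem (ha g), ?_, fun n hn => by
      show (δ n)⁻¹ = 1
      rw [hv n hn, inv_one]⟩
    intro x y
    show (δ (x * y))⁻¹ = y⁻¹ * (δ x)⁻¹ * y * (δ y)⁻¹
    rw [hd x y]
    have hc : (δ y)⁻¹ * (y⁻¹ * (δ x)⁻¹ * y) = (y⁻¹ * (δ x)⁻¹ * y) * (δ y)⁻¹ :=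
      omegaOneCenterOf_comm (inv_mem (ha y)) (omegaOneCenterOf_conj hN (inv_mem (ha x)) y)
    have h : (y⁻¹ * δ x * y * δ y)⁻¹ = (δ y)⁻¹ * (y⁻¹ * (δ x)⁻¹ * y) := by group
    rw [h, hc]



lemma three_comm {G : Type*} [Group G] {a b d : G} (hab : a * b = b * a)
    (had : a * d = d * a) (hbd : b * d = d * b) : a * b * d = d * b * a := by
  rw [mul_assoc, hbd, ← mul_assoc, had, mul_assoc, hab, ← mul_assoc]

lemma pair_pow_eq_one {G : Type*} [Group G] {p : ℕ} {c₁ c₂ z : G}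
    (h12 : Commute c₁ c₂) (hz : ∀ x : G, x * z = z * x)
    (hzp : z ^ p = (c₁ ^ p)⁻¹ * c₂ ^ p) :
    (c₂ * c₁⁻¹ * z⁻¹) ^ p = 1 := by
  have hcmz : Commute (c₂ * c₁⁻¹) z⁻¹ := Commute.inv_right (hz (c₂ * c₁⁻¹))
  have hcm21 : Commute c₂ c₁⁻¹ := Commute.inv_right h12.symm
  rw [Commute.mul_pow hcmz, Commute.mul_pow hcm21, inv_pow, inv_pow, hzp]
  have hXY : Commute (c₁ ^ p) (c₂ ^ p) := h12.pow_pow p p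
  rw [mul_inv_rev, inv_inv]
  have h5 : c₂ ^ p * (c₁ ^ p)⁻¹ = (c₁ ^ p)⁻¹ * c₂ ^ p := (hXY.inv_left.eq).symm
  rw [h5]; group

lemma pair_inner {G : Type*} [Group G] {g c₁ c₂ z : G}
    (h12 : Commute c₁ c₂)
    (h1B : Commute c₁ (g⁻¹ * c₂ * g))
    (h2B : Commute c₂ (g⁻¹ * c₂ * g))
    (hz : ∀ x : G, x * z = z * x) :
    (g⁻¹ * c₁ * g * c₁⁻¹) * (g⁻¹ * c₂ * g * c₂⁻¹)⁻¹
      = g⁻¹ * (c₂ * c₁⁻¹ * z⁻¹)⁻¹ * g * (c₂ * c₁⁻¹ * z⁻¹) := by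
  have e1 : g⁻¹ * c₁ * g * c₁⁻¹ * (g⁻¹ * c₂ * g * c₂⁻¹)⁻¹
      = (g⁻¹ * c₁ * g) * (c₁⁻¹ * c₂ * (g⁻¹ * c₂ * g)⁻¹) := by group
  have e2 : c₁⁻¹ * c₂ * (g⁻¹ * c₂ * g)⁻¹ = (g⁻¹ * c₂ * g)⁻¹ * c₂ * c₁⁻¹ :=
    three_comm h12.inv_left.eq (h1B.inv_left.inv_right).eq h2B.inv_right.eq
  rw [e1, e2]
  have e3 : g⁻¹ * (c₂ * c₁⁻¹ * z⁻¹)⁻¹ * g * (c₂ * c₁⁻¹ * z⁻¹)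
      = (g⁻¹ * z) * (c₁ * c₂⁻¹ * g * c₂ * c₁⁻¹ * z⁻¹) := by group
  have hgz : g⁻¹ * z = z * g⁻¹ := hz g⁻¹
  rw [e3, hgz]
  have e4 : z * g⁻¹ * (c₁ * c₂⁻¹ * g * c₂ * c₁⁻¹ * z⁻¹)
      = z * (g⁻¹ * c₁ * c₂⁻¹ * g * c₂ * c₁⁻¹) * z⁻¹ := by group
  have e5 : z * (g⁻¹ * c₁ * c₂⁻¹ * g * c₂ * c₁⁻¹) * z⁻¹
      = g⁻¹ * c₁ * c₂⁻¹ * g * c₂ * c₁⁻¹ := by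
    rw [← hz (g⁻¹ * c₁ * c₂⁻¹ * g * c₂ * c₁⁻¹)]; group
  rw [e4, e5]
  group

lemma pow_eq_pow_of_mod {H : Type*} [Monoid H] {p : ℕ} {a : H} (hexp : a ^ p = 1)
    {i j : ℕ} (hij : i % p = j % p) : a ^ i = a ^ j := by
  conv_lhs => rw [← Nat.div_add_mod i p]
  conv_rhs => rw [← Nat.div_add_mod j p]
  rw [pow_add, pow_add, pow_mul, pow_mul, hexp, one_pow, one_pow, hij]

lemma card_le_pow_of_gen {H : Type*} [CommGroup H] [Finite H] {p : ℕ} (hp : p.Prime)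
    (S : Finset H) (hgen : Subgroup.closure (S : Set H) = ⊤) (hexp : ∀ x : H, x ^ p = 1) :
    Nat.card H ≤ p ^ S.card := by
  haveI : NeZero p := ⟨hp.pos.ne'⟩
  classical
  set ψ : Multiplicative ({x // x ∈ S} → ZMod p) →* H :=
    MonoidHom.mk' (fun e => ∏ s : {x // x ∈ S}, (s : H) ^ ((Multiplicative.toAdd e) s).val)
      (by
        intro e₁ e₂
        rw [← Finset.prod_mul_distrib]
        refine Finset.prod_congr rfl fun s _ => ?_
        rw [← pow_add]
        refine pow_eq_pow_of_mod (hexp _) ?_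
        have : Multiplicative.toAdd (e₁ * e₂) s
            = Multiplicative.toAdd e₁ s + Multiplicative.toAdd e₂ s := rfl
        rw [this, ZMod.val_add]; exact Nat.mod_mod_of_dvd _ dvd_rfl
        ) with hψ
  have hsurj : Function.Surjective ψ := by
    have hrange : Subgroup.closure (S : Set H) ≤ ψ.range := by
      rw [Subgroup.closure_le]
      intro s hs
      refine ⟨Multiplicative.ofAdd (fun t => if t = ⟨s, hs⟩ then (1 : ZMod p) else 0), ?_⟩
      show ∏ t : {x // x ∈ S}, (t : H) ^ ((if t = ⟨s, hs⟩ then (1 : ZMod p) else 0)).val = s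
      rw [Fintype.prod_eq_single (⟨s, hs⟩ : {x // x ∈ S})]
      · simp [ZMod.val_one_eq_one_mod, Nat.mod_eq_of_lt hp.one_lt]
      · intro t ht
        simp [ht]
    have htop : (⊤ : Subgroup H) ≤ ψ.range := hgen ▸ hrange
    intro x
    exact htop (Subgroup.mem_top x)
  calc Nat.card H ≤ Nat.card (Multiplicative ({x // x ∈ S} → ZMod p)) :=
        Nat.card_le_card_of_surjective ψ hsurj
    _ = p ^ S.card := by
        rw [Nat.card_congr Multiplicative.toAdd, Nat.card_fun]
        simp [Nat.card_eq_fintype_card, ZMod.card]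

lemma omegaOneCenterOf_pow {G : Type*} [Group G] {p : ℕ} {N : Subgroup G} {w : G}
    (hw : w ∈ omegaOneCenterOf p N) : w ^ p = 1 := by
  induction hw using Subgroup.closure_induction with
  | mem s hs => exact hs.2
  | one => exact one_pow p
  | mul a b ha hb iha ihb =>
    rw [Commute.mul_pow (omegaOneCenterOf_comm ha hb), iha, ihb, one_mul]
  | inv a ha iha => rw [inv_pow, iha, inv_one]

/-- The endomorphism `g ↦ g · δ(g)` attached to a derivation `δ`. -/
def derEnd {G : Type*} [Group G] {p : ℕ} {N : Subgroup G} {hN : N.Normal}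
    (δ : ↥(DerOmega p N hN)) : G →* G where
  toFun g := g * (δ : G → G) g
  map_one' := by
    obtain ⟨h1, h2, h3⟩ := δ.2
    show 1 * (δ : G → G) 1 = 1
    rw [h3 1 N.one_mem, mul_one]
  map_mul' x y := by
    obtain ⟨h1, h2, h3⟩ := δ.2
    show x * y * (δ : G → G) (x * y) = (x * (δ : G → G) x) * (y * (δ : G → G) y)
    rw [h2 x y]
    group

open scoped IsMulCommutative in
/-- Let `p` be an odd prime, `G` a finite non-abelian `p`-group, and `N ⊴ G` with
`C_G(N) ≤ N`.  Suppose `d(Z(G)) < m` and the quotient of `Der(G/N, Ω₁(Z(N)))` by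
`Ider(G/N, Ω₁(Z(N)))` is elementary abelian of order `p^m` (expressed via a surjective
homomorphism onto `(ZMod p)^m` whose kernel is exactly the set of inner derivations
`δ_h : g ↦ (h⁻¹)^g · h = g⁻¹h⁻¹gh`, `h ∈ Ω₁(Z(N))`).  Then `G` has a non-inner
automorphism of order `p`. -/
theorem noninner_of_der_quotient_elementary_abelian
    {p : ℕ} (hp : p.Prime) (hodd : Odd p) {G : Type*} [Group G] [Finite G]
    (hpG : IsPGroup p G) (hnab : ∃ a b : G, a * b ≠ b * a)
    (N : Subgroup G) (hN : N.Normal)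
    (hCN : Subgroup.centralizer (N : Set G) ≤ N)
    (m : ℕ) (hm : Group.rank ↥(Subgroup.center G) < m)
    (hH1 : ∃ f : ↥(DerOmega p N hN) →* Multiplicative (Fin m → ZMod p),
      Function.Surjective f ∧
      ∀ δ : ↥(DerOmega p N hN), f δ = 1 ↔
        ∃ h ∈ omegaOneCenterOf p N, ∀ g : G, (δ : G → G) g = g⁻¹ * h⁻¹ * g * h) :
    ∃ φ : MulAut G, orderOf φ = p ∧ ∀ g : G, φ ≠ MulAut.conj g := by
  classical
  haveI : Fact p.Prime := ⟨hp⟩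
  by_contra hcon
  push_neg at hcon
  obtain ⟨f, hf_surj, hf_ker⟩ := hH1
  -- `Z(N) = C_G(N) ⊓ N` inside `G`
  have hZNcomm : ∀ a ∈ Subgroup.centralizer (N : Set G) ⊓ N,
      ∀ b ∈ Subgroup.centralizer (N : Set G) ⊓ N, a * b = b * a := by
    intro a ha b hb
    obtain ⟨hac, haN⟩ := Subgroup.mem_inf.mp ha
    obtain ⟨hbc, hbN⟩ := Subgroup.mem_inf.mp hb
    exact (Subgroup.mem_centralizer_iff.mp hac b hbN).symm
  have hZNconj : ∀ a ∈ Subgroup.centralizer (N : Set G) ⊓ N, ∀ g : G,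
      g⁻¹ * a * g ∈ Subgroup.centralizer (N : Set G) ⊓ N := by
    intro a ha g
    obtain ⟨hac, haN⟩ := Subgroup.mem_inf.mp ha
    refine Subgroup.mem_inf.mpr ⟨?_, ?_⟩
    · rw [Subgroup.mem_centralizer_iff]
      intro n hn
      have h1 : g * n * g⁻¹ ∈ N := by
        have := hN.conj_mem n hn g
        simpa [mul_assoc] using this
      have h2 := Subgroup.mem_centralizer_iff.mp hac (g * n * g⁻¹) h1
      have h3 : n * (g⁻¹ * a * g) = g⁻¹ * (g * n * g⁻¹ * a) * g := by group
      rw [h3, h2]; group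
    · have := hN.conj_mem a haN g⁻¹
      simpa using this
  have hΩN : omegaOneCenterOf p N ≤ N := le_trans (omegaOneCenterOf_le p N) inf_le_right
  have hval : ∀ δ : ↥(DerOmega p N hN), ∀ g : G,
      (δ : G → G) g ∈ omegaOneCenterOf p N := by
    intro δ; obtain ⟨h1, h2, h3⟩ := δ.2; exact h1
  have hder : ∀ δ : ↥(DerOmega p N hN), ∀ x y : G,
      (δ : G → G) (x * y) = y⁻¹ * (δ : G → G) x * y * (δ : G → G) y := by
    intro δ; obtain ⟨h1, h2, h3⟩ := δ.2; exact h2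
  have hvan : ∀ δ : ↥(DerOmega p N hN), ∀ n ∈ N, (δ : G → G) n = 1 := by
    intro δ; obtain ⟨h1, h2, h3⟩ := δ.2; exact h3
  -- every derivation gives an inner automorphism (by the contradiction hypothesis)
  have hinner : ∀ δ : ↥(DerOmega p N hN), ∃ cc : G,
      ∀ g : G, g * (δ : G → G) g = cc * g * cc⁻¹ := by
    intro δ
    have hinj : Function.Injective (derEnd δ) := by
      rw [injective_iff_map_eq_one]
      intro a ha
      have ha' : a * (δ : G → G) a = 1 := ha
      have haN : a ∈ N := by
        have hae : a = ((δ : G → G) a)⁻¹ := eq_inv_of_mul_eq_one_left ha'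
        rw [hae]
        exact inv_mem (hΩN (hval δ a))
      rw [hvan δ a haN, mul_one] at ha'
      exact ha'
    have hbij : Function.Bijective (derEnd δ) := Finite.injective_iff_bijective.mp hinj
    set φ : MulAut G := MulEquiv.ofBijective (derEnd δ) hbij with hφdef
    have hφapp : ∀ g : G, φ g = g * (δ : G → G) g := fun g => rfl
    have hδw : ∀ (g w : G), w ∈ omegaOneCenterOf p N →
        (δ : G → G) (g * w) = w⁻¹ * (δ : G → G) g * w := by
      intro g w hw
      rw [hder δ g w, hvan δ w (hΩN hw), mul_one]
    have hφpow : ∀ (k : ℕ) (g : G), (φ ^ k) g = g * ((δ : G → G) g) ^ k := by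
      intro k
      induction k with
      | zero => intro g; simp
      | succ k ih =>
        intro g
        rw [pow_succ, MulAut.mul_apply, hφapp g, ih (g * (δ : G → G) g),
          hδw g _ (hval δ g)]
        have h1 : ((δ : G → G) g)⁻¹ * (δ : G → G) g * (δ : G → G) g = (δ : G → G) g := by
          group
        rw [h1, mul_assoc, ← pow_succ']
    have hφp : φ ^ p = 1 := by
      ext g
      rw [hφpow p g, omegaOneCenterOf_pow (hval δ g), mul_one, MulAut.one_apply]
    by_cases h1 : φ = 1
    · refine ⟨1, fun g => ?_⟩
      have h2 := hφapp g
      rw [h1] at h2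
      simpa using h2.symm
    · obtain ⟨cc, hcc⟩ := hcon φ (orderOf_eq_prime hφp h1)
      refine ⟨cc, fun g => ?_⟩
      rw [← hφapp g, hcc, MulAut.conj_apply]
  choose c hc using hinner
  have hdv : ∀ (δ : ↥(DerOmega p N hN)) (g : G),
      (δ : G → G) g = g⁻¹ * c δ * g * (c δ)⁻¹ := by
    intro δ g
    have h := hc δ g
    have h2 : g⁻¹ * (g * (δ : G → G) g) = g⁻¹ * (c δ * g * (c δ)⁻¹) := by rw [h]
    simpa [mul_assoc] using h2
  have hcZN : ∀ δ : ↥(DerOmega p N hN), c δ ∈ Subgroup.centralizer (N : Set G) ⊓ N := by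
    intro δ
    have hcent : c δ ∈ Subgroup.centralizer (N : Set G) := by
      rw [Subgroup.mem_centralizer_iff]
      intro n hn
      have h := hc δ n
      rw [hvan δ n hn, mul_one] at h
      have h2 : n * c δ = c δ * n * (c δ)⁻¹ * c δ := by rw [← h]
      simpa [mul_assoc] using h2
    exact Subgroup.mem_inf.mpr ⟨hcent, hCN hcent⟩
  have hcp : ∀ δ : ↥(DerOmega p N hN), (c δ) ^ p ∈ Subgroup.center G := by
    intro δ
    rw [Subgroup.mem_center_iff]
    intro g
    have h1 : ((δ : G → G) g) ^ p = 1 := omegaOneCenterOf_pow (hval δ g)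
    rw [hdv δ g] at h1
    have hu : g⁻¹ * c δ * g ∈ Subgroup.centralizer (N : Set G) ⊓ N :=
      hZNconj _ (hcZN δ) g
    have hcm : Commute (g⁻¹ * c δ * g) (c δ)⁻¹ :=
      hZNcomm _ hu _ (inv_mem (hcZN δ))
    rw [Commute.mul_pow hcm] at h1
    have h3 : (g⁻¹ * c δ * g) ^ p = g⁻¹ * (c δ) ^ p * g := by
      have := conj_pow (a := g⁻¹) (b := c δ) (i := p)
      simpa using this
    rw [h3, inv_pow] at h1
    have h4 : g * (g⁻¹ * (c δ) ^ p * g * ((c δ) ^ p)⁻¹) * (c δ) ^ p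
        = g * 1 * (c δ) ^ p := by rw [h1]
    simpa [mul_assoc] using h4.symm
  -- the quotient `Z(G)/Z(G)^p`
  set ZP : Subgroup ↥(Subgroup.center G) :=
    (powMonoidHom p : ↥(Subgroup.center G) →* ↥(Subgroup.center G)).range with hZPdef
  choose sec hsec using hf_surj
  have hFFinj : Function.Injective
      (fun a : Multiplicative (Fin m → ZMod p) =>
        (QuotientGroup.mk (⟨(c (sec a)) ^ p, hcp (sec a)⟩ : ↥(Subgroup.center G))
          : ↥(Subgroup.center G) ⧸ ZP)) := by
    intro a₁ a₂ hEq
    simp only at hEq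
    rw [QuotientGroup.eq] at hEq
    obtain ⟨z, hz⟩ := hEq
    have hzG : (z : G) ^ p = ((c (sec a₁)) ^ p)⁻¹ * (c (sec a₂)) ^ p := by
      have h := congrArg Subtype.val hz
      simpa using h
    have hzc : ∀ x : G, x * (z : G) = (z : G) * x :=
      fun x => Subgroup.mem_center_iff.mp z.2 x
    have hzZN : (z : G) ∈ Subgroup.centralizer (N : Set G) ⊓ N := by
      have hzcent : (z : G) ∈ Subgroup.centralizer (N : Set G) := by
        rw [Subgroup.mem_centralizer_iff]; intro n hn; exact hzc n
      exact Subgroup.mem_inf.mpr ⟨hzcent, hCN hzcent⟩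
    have hc12 : Commute (c (sec a₁)) (c (sec a₂)) :=
      hZNcomm _ (hcZN (sec a₁)) _ (hcZN (sec a₂))
    have hh₀ZN : c (sec a₂) * (c (sec a₁))⁻¹ * (z : G)⁻¹
        ∈ Subgroup.centralizer (N : Set G) ⊓ N :=
      mul_mem (mul_mem (hcZN (sec a₂)) (inv_mem (hcZN (sec a₁)))) (inv_mem hzZN)
    have hh₀p : (c (sec a₂) * (c (sec a₁))⁻¹ * (z : G)⁻¹) ^ p = 1 :=
      pair_pow_eq_one hc12 hzc hzG
    have hh₀Ω : c (sec a₂) * (c (sec a₁))⁻¹ * (z : G)⁻¹ ∈ omegaOneCenterOf p N :=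
      Subgroup.subset_closure ⟨hh₀ZN, hh₀p⟩
    have hid : ∀ g : G, ((sec a₁ * (sec a₂)⁻¹ : ↥(DerOmega p N hN)) : G → G) g
        = g⁻¹ * (c (sec a₂) * (c (sec a₁))⁻¹ * (z : G)⁻¹)⁻¹ * g
          * (c (sec a₂) * (c (sec a₁))⁻¹ * (z : G)⁻¹) := by
      intro g
      have hcoe : ((sec a₁ * (sec a₂)⁻¹ : ↥(DerOmega p N hN)) : G → G) g
          = (sec a₁ : G → G) g * ((sec a₂ : G → G) g)⁻¹ := rfl
      rw [hcoe, hdv (sec a₁) g, hdv (sec a₂) g]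
      have hB : g⁻¹ * c (sec a₂) * g ∈ Subgroup.centralizer (N : Set G) ⊓ N :=
        hZNconj _ (hcZN (sec a₂)) g
      exact pair_inner hc12 (hZNcomm _ (hcZN (sec a₁)) _ hB)
        (hZNcomm _ (hcZN (sec a₂)) _ hB) hzc
    have hIder : f (sec a₁ * (sec a₂)⁻¹) = 1 :=
      (hf_ker _).mpr ⟨c (sec a₂) * (c (sec a₁))⁻¹ * (z : G)⁻¹, hh₀Ω, hid⟩
    rw [map_mul, map_inv, hsec, hsec] at hIder
    exact mul_inv_eq_one.mp hIder
  -- counting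
  have hcardA : Nat.card (Multiplicative (Fin m → ZMod p)) = p ^ m := by
    rw [Nat.card_congr Multiplicative.toAdd, Nat.card_fun]
    simp [Nat.card_eq_fintype_card, ZMod.card]
  have hle1 : Nat.card (Multiplicative (Fin m → ZMod p))
      ≤ Nat.card (↥(Subgroup.center G) ⧸ ZP) :=
    Nat.card_le_card_of_injective _ hFFinj
  obtain ⟨S, hScard, hSgen⟩ := Group.rank_spec ↥(Subgroup.center G)
  have hexpQ : ∀ x : ↥(Subgroup.center G) ⧸ ZP, x ^ p = 1 := by
    intro x
    obtain ⟨y, rfl⟩ := QuotientGroup.mk'_surjective ZP x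
    rw [← map_pow]
    have hyp : y ^ p ∈ ZP := ⟨y, rfl⟩
    simpa [QuotientGroup.mk'_apply] using (QuotientGroup.eq_one_iff _).mpr hyp
  have hgenQ : Subgroup.closure
      (((S.image (QuotientGroup.mk' ZP)) : Finset (↥(Subgroup.center G) ⧸ ZP))
        : Set (↥(Subgroup.center G) ⧸ ZP)) = ⊤ := by
    rw [Finset.coe_image, ← MonoidHom.map_closure, hSgen]
    exact Subgroup.map_top_of_surjective _ (QuotientGroup.mk'_surjective ZP)
  have hQle : Nat.card (↥(Subgroup.center G) ⧸ ZP)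
      ≤ p ^ (S.image (QuotientGroup.mk' ZP)).card :=
    card_le_pow_of_gen hp _ hgenQ hexpQ
  have hQle2 : p ^ (S.image (QuotientGroup.mk' ZP)).card
      ≤ p ^ Group.rank ↥(Subgroup.center G) := by
    refine Nat.pow_le_pow_right hp.pos ?_
    rw [← hScard]
    exact Finset.card_image_le
  have hlt : p ^ Group.rank ↥(Subgroup.center G) < p ^ m :=
    Nat.pow_lt_pow_right hp.one_lt hm
  omega
end

section
/- Let G be a group, A a normal abelian subgroup of G, and δ: G → A a derivation with respect to the conjugation action of G on A. Let φ be the endomorphism of G defined by φ(g) = g·δ(g). Then for every positive integer n and every g ∈ G, φⁿ(g) = ∏_{i=0}^{n} (δⁱ(g))^{C(n,i)}, where δ⁰(g) = g, δⁱ(g) = δ(δ^{i−1}(g)) for i ≥ 1, C(n,i) is the binomial coefficient, and the product is taken in the order i = 0, 1, …, n (all factors with i ≥ 1 lie in the abelian group A). -/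
/-- Let `A` be a normal abelian subgroup of `G` and `δ : G → A` a derivation with
respect to the conjugation action.  Let `φ(g) = g·δ(g)` be the induced endomorphism.
Then for every positive integer `n` and every `g ∈ G`,
`φⁿ(g) = ∏_{i=0}^{n} (δⁱ(g))^(n choose i)`, the product taken in the order `i = 0,…,n`. -/
theorem endomorphism_iterate_eq_prod_derivation_pow
    {G : Type*} [Group G] (A : Subgroup G) (hA : A.Normal)
    (hab : ∀ a ∈ A, ∀ b ∈ A, a * b = b * a)
    (δ : G → G) (hmem : ∀ g : G, δ g ∈ A)
    (hδ : ∀ x y : G, δ (x * y) = y⁻¹ * δ x * y * δ y)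
    (n : ℕ) (hn : 0 < n) (g : G) :
    (fun x : G => x * δ x)^[n] g =
      ((List.range (n + 1)).map fun i => δ^[i] g ^ n.choose i).prod := by
  letI : CommGroup A :=
    { (inferInstance : Group A) with
      mul_comm := fun a b => Subtype.ext (hab a a.2 b b.2) }
  have hconj : ∀ x y : G, x ∈ A → y ∈ A → y⁻¹ * x * y = x := by
    intro x y hx hy
    rw [mul_assoc, hab x hx y hy, ← mul_assoc, inv_mul_cancel, one_mul]
  have hδA : ∀ x y : G, x ∈ A → y ∈ A → δ (x * y) = δ x * δ y := by
    intro x y hx hy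
    rw [hδ, hconj _ _ (hmem x) hy]
  have hδ1 : δ 1 = 1 := by
    have h := hδ 1 1
    simp only [mul_one, one_mul, inv_one] at h
    have h2 : δ 1 * 1 = δ 1 * δ 1 := by rw [mul_one]; exact h
    exact (mul_left_cancel h2).symm
  set D : A →* A :=
    { toFun := fun x => ⟨δ x, hmem x⟩
      map_one' := Subtype.ext (by simp [hδ1])
      map_mul' := fun x y => Subtype.ext (hδA x y x.2 y.2) } with hD
  set a : A := ⟨δ g, hmem g⟩ with ha
  have hiter : ∀ i : ℕ, δ^[i + 1] g = ((D^[i] a : A) : G) := by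
    intro i
    induction i with
    | zero => simp [ha]
    | succ i ih =>
      rw [Function.iterate_succ_apply' δ (i + 1) g, ih,
        Function.iterate_succ_apply' D i a]
      rfl
  have key : ∀ m : ℕ, (fun x : G => x * δ x)^[m + 1] g =
      g * ((∏ i ∈ Finset.range (m + 1),
        (D^[i] a) ^ ((m + 1).choose (i + 1)) : A) : G) := by
    intro m
    induction m with
    | zero =>
      simp [ha]
    | succ m ih =>
      rw [Function.iterate_succ_apply' _ (m + 1) g, ih]
      set T : A := ∏ i ∈ Finset.range (m + 1),
        (D^[i] a) ^ ((m + 1).choose (i + 1)) with hT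
      have hDT : D T = ∏ i ∈ Finset.range (m + 1),
          (D^[i + 1] a) ^ ((m + 1).choose (i + 1)) := by
        rw [hT, map_prod]
        refine Finset.prod_congr rfl fun i _ => ?_
        rw [map_pow, ← Function.iterate_succ_apply' D i a]
      have h1 : a * D T = ∏ i ∈ Finset.range (m + 2),
          (D^[i] a) ^ ((m + 1).choose i) := by
        conv_rhs => rw [Finset.prod_range_succ']
        rw [hDT, mul_comm]
        congr 1
        simp
      have h2 : T = ∏ i ∈ Finset.range (m + 2),
          (D^[i] a) ^ ((m + 1).choose (i + 1)) := by
        rw [Finset.prod_range_succ, Nat.choose_succ_self, pow_zero, mul_one, hT]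
      have h3 : T * (a * D T) = ∏ i ∈ Finset.range (m + 2),
          (D^[i] a) ^ ((m + 2).choose (i + 1)) := by
        rw [h1, h2, ← Finset.prod_mul_distrib]
        refine Finset.prod_congr rfl fun i _ => ?_
        rw [← pow_add, Nat.choose_succ_succ (m + 1) i, Nat.add_comm]
      have hδgT : δ (g * (T : G)) = ((a * D T : A) : G) := by
        rw [hδ, hconj _ _ (hmem g) T.2]
        rfl
      show g * (T : G) * δ (g * (T : G)) = _
      rw [hδgT, mul_assoc, ← Subgroup.coe_mul, h3]
  obtain ⟨m, rfl⟩ : ∃ m, n = m + 1 := ⟨n - 1, (Nat.succ_pred_eq_of_pos hn).symm⟩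
  rw [key m, List.range_succ_eq_map, List.map_cons, List.prod_cons, List.map_map]
  have h0 : δ^[0] g ^ (m + 1).choose 0 = g := by simp
  rw [h0]
  congr 1
  have hcongr : ((List.range (m + 1)).map
        ((fun i => δ^[i] g ^ (m + 1).choose i) ∘ Nat.succ)) =
      (List.range (m + 1)).map
        (fun i => (((D^[i] a) ^ ((m + 1).choose (i + 1)) : A) : G)) := by
    refine List.map_congr_left fun i _ => ?_
    simp only [Function.comp_apply]
    rw [Nat.succ_eq_add_one, hiter i]
    push_cast
    rfl
  have hlist : ∀ (k : ℕ) (h : ℕ → A),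
      ((List.range k).map (fun i => (h i : G))).prod =
        ((∏ i ∈ Finset.range k, h i : A) : G) := by
    intro k h
    induction k with
    | zero => simp
    | succ k ih =>
      rw [List.range_succ, List.map_append, List.prod_append,
        Finset.prod_range_succ, ih]
      push_cast
      simp
  rw [hcongr, hlist]
end

section
/- Let p be a prime, L a finite p-group, and M a finite F_p L-module such that the fixed-point submodule C_M(L) is one-dimensional over F_p and the first cohomology group H¹(L, M) is trivial. Then M is isomorphic to the regular module F_p[L] as an F_p L-module. -/
open MulOpposite

section Defs

variable (p : ℕ) (L : Type*) [Group L] (M : Type*) [AddCommGroup M] [Module (ZMod p) M]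
  [DistribMulAction Lᵐᵒᵖ M] [SMulCommClass Lᵐᵒᵖ (ZMod p) M]

/-- The fixed points `C_M(L)` of the right `L`-action on `M`, as an `F_p`-subspace. -/
def fixedSub : Submodule (ZMod p) M where
  carrier := {m | ∀ g : Lᵐᵒᵖ, g • m = m}
  add_mem' := by intro a b ha hb g; rw [smul_add, ha g, hb g]
  zero_mem' := by intro g; exact smul_zero g
  smul_mem' := by intro c m hm g; rw [smul_comm, hm g]

/-- The `F_p`-space of derivations `δ : L → M`, i.e. maps with
`δ(xy) = δ(x)·y + δ(y)` (right action written as `op y • _`). -/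
def Der : Submodule (ZMod p) (L → M) where
  carrier := {δ | ∀ x y : L, δ (x * y) = op y • δ x + δ y}
  add_mem' := by
    intro a b ha hb x y
    simp only [Pi.add_apply, ha x y, hb x y, smul_add]
    abel
  zero_mem' := by intro x y; simp
  smul_mem' := by
    intro c δ hδ x y
    simp only [Pi.smul_apply, hδ x y, smul_add, smul_comm (op y) c]

/-- The subspace of inner derivations `g ↦ m·g − m`. -/
def Ider : Submodule (ZMod p) (L → M) where
  carrier := {δ | ∃ m : M, ∀ g : L, δ g = op g • m - m}
  add_mem' := by
    rintro a b ⟨m, hm⟩ ⟨m', hm'⟩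
    exact ⟨m + m', fun g => by simp only [Pi.add_apply, hm g, hm' g, smul_add]; abel⟩
  zero_mem' := ⟨0, fun g => by simp⟩
  smul_mem' := by
    rintro c δ ⟨m, hm⟩
    exact ⟨c • m, fun g => by
      simp only [Pi.smul_apply, hm g, smul_sub, smul_comm (op g) c]⟩

end Defs

open MulAction in

/-- If a finite `p`-group acts linearly on a nontrivial finite `F_p`-vector space,
there is a nonzero fixed vector. -/
lemma aux_exists_fixed {p : ℕ} (hp : p.Prime) {G : Type*} [Group G] [Finite G]
    (hpG : IsPGroup p G) {V : Type*} [AddCommGroup V] [Module (ZMod p) V] [Finite V]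
    [Nontrivial V] (ρ : G →* Module.End (ZMod p) V) :
    ∃ v : V, v ≠ 0 ∧ ∀ g : G, ρ g v = v := by
  classical
  haveI : Fact p.Prime := ⟨hp⟩
  letI : MulAction G V :=
    { smul := fun g v => ρ g v
      one_smul := fun v => by show ρ 1 v = v; simp
      mul_smul := fun g h v => by
        show ρ (g * h) v = ρ g (ρ h v)
        simp [map_mul, Module.End.mul_apply] }
  have hmod := hpG.card_modEq_card_fixedPoints V
  obtain ⟨v0, hv0⟩ := exists_ne (0 : V)
  have hcard : p ∣ Nat.card V := by
    have h1 : (p : ℕ) • v0 = 0 := by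
      rw [← Nat.cast_smul_eq_nsmul (ZMod p), ZMod.natCast_self, zero_smul]
    have h2 : addOrderOf v0 ∣ p := addOrderOf_dvd_of_nsmul_eq_zero h1
    have h3 : addOrderOf v0 = p := by
      rcases (Nat.Prime.eq_one_or_self_of_dvd hp _ h2) with h | h
      · exact absurd (AddMonoid.addOrderOf_eq_one_iff.mp h) hv0
      · exact h
    exact h3 ▸ addOrderOf_dvd_natCard v0
  have hfixdvd : p ∣ Nat.card (fixedPoints G V) := by
    have := (Nat.modEq_zero_iff_dvd.mpr hcard).symm.trans hmod
    exact Nat.modEq_zero_iff_dvd.mp this.symm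
  have h0fix : (0 : V) ∈ fixedPoints G V := fun g => by
    show ρ g 0 = 0; simp
  haveI : Finite (fixedPoints G V) := Subtype.finite
  have hpos : 0 < Nat.card (fixedPoints G V) :=
    Nat.card_pos_iff.mpr ⟨⟨⟨0, h0fix⟩⟩, inferInstance⟩
  have hge : p ≤ Nat.card (fixedPoints G V) := Nat.le_of_dvd hpos hfixdvd
  haveI := Fintype.ofFinite (fixedPoints G V)
  have hlt : 1 < Fintype.card (fixedPoints G V) := by
    rw [Nat.card_eq_fintype_card] at hge
    have := hp.two_le
    omega
  obtain ⟨w, hw⟩ := Fintype.exists_ne_of_one_lt_card hlt ⟨0, h0fix⟩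
  refine ⟨w.1, fun h => hw (Subtype.ext h), fun g => w.2 g⟩

/-- Let `p` be a prime, `L` a finite `p`-group, and `M` a finite `F_p L`-module
(right action encoded via `Lᵐᵒᵖ`) such that `C_M(L)` is one-dimensional over `F_p` and
`H¹(L, M)` is trivial (every derivation is inner).  Then `M` is isomorphic to the
regular module `F_p[L]` as an `F_p L`-module. -/
theorem isomorphic_regular_of_fixed_dim_one_of_h1_trivial
    {p : ℕ} (hp : p.Prime) {L : Type*} [Group L] [Finite L] (hpL : IsPGroup p L)
    {M : Type*} [AddCommGroup M] [Module (ZMod p) M] [Finite M]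
    [DistribMulAction Lᵐᵒᵖ M] [SMulCommClass Lᵐᵒᵖ (ZMod p) M]
    (hfix : Module.finrank (ZMod p) ↥(fixedSub p L M) = 1)
    (hH1 : Der p L M ≤ Ider p L M) :
    ∃ e : M ≃ₗ[ZMod p] MonoidAlgebra (ZMod p) L,
      ∀ (g : L) (m : M), e (op g • m) = e m * MonoidAlgebra.of (ZMod p) L g := by
  classical
  haveI : Fact p.Prime := ⟨hp⟩
  haveI : NeZero p := ⟨hp.ne_zero⟩
  haveI := Fintype.ofFinite L
  haveI : Finite Lᵐᵒᵖ := Finite.of_equiv L opEquiv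
  have hpOp : IsPGroup p Lᵐᵒᵖ := fun g => by
    obtain ⟨k, hk⟩ := hpL g.unop
    exact ⟨k, unop_injective (by simpa using hk)⟩
  -- the fixed vector m₀
  obtain ⟨v₀, hv₀ne, hv₀span⟩ := finrank_eq_one_iff'.mp hfix
  set m₀ : M := (v₀ : M) with hm₀def
  have hm₀ne : m₀ ≠ 0 := fun h => hv₀ne (Subtype.ext h)
  have hm₀fix : ∀ g : Lᵐᵒᵖ, g • m₀ = m₀ := v₀.2
  -- a linear functional with f m₀ = 1
  obtain ⟨f, hf⟩ : ∃ f : M →ₗ[ZMod p] ZMod p, f m₀ = 1 := by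
    obtain ⟨g, hg⟩ := LinearMap.exists_extend
      ((LinearEquiv.coord (ZMod p) M m₀ hm₀ne).toLinearMap)
    refine ⟨g, ?_⟩
    have := congrArg (fun h => h (⟨m₀, Submodule.mem_span_singleton_self m₀⟩ : _)) hg
    simpa [LinearEquiv.coord_self] using this
  -- the comparison map φ
  let φ : M →ₗ[ZMod p] MonoidAlgebra (ZMod p) L :=
    { toFun := fun m => MonoidAlgebra.ofCoeff (Finsupp.equivFunOnFinite.symm (fun a : L => f (op a⁻¹ • m)))
      map_add' := fun x y => MonoidAlgebra.ext <| Finsupp.ext fun a => by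
        simp only [MonoidAlgebra.coeff_add, Finsupp.add_apply]
        show f (op a⁻¹ • (x + y)) = f (op a⁻¹ • x) + f (op a⁻¹ • y)
        rw [smul_add, map_add]
      map_smul' := fun c x => MonoidAlgebra.ext <| Finsupp.ext fun a => by
        simp only [MonoidAlgebra.coeff_smul, Finsupp.smul_apply, RingHom.id_apply]
        show f (op a⁻¹ • (c • x)) = c • f (op a⁻¹ • x)
        rw [smul_comm, map_smul] }
  have hφapp : ∀ (m : M) (a : L), (φ m).coeff a = f (op a⁻¹ • m) := fun m a => rfl
  have hφmul : ∀ (g : L) (m : M), φ (op g • m) = φ m * MonoidAlgebra.of (ZMod p) L g := by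
    intro g m
    refine MonoidAlgebra.ext <| Finsupp.ext fun a => ?_
    rw [hφapp, MonoidAlgebra.of_apply, MonoidAlgebra.coeff_mul_single_apply, hφapp, mul_one]
    congr 1
    rw [← mul_smul]
    congr 1
    simp [mul_inv_rev]
  have hφinj : Function.Injective φ := by
    refine (injective_iff_map_eq_zero φ).mpr fun m hm => ?_
    by_contra hm0
    set S : Submodule (ZMod p) M :=
      Submodule.span (ZMod p) (Set.range fun g : Lᵐᵒᵖ => g • m) with hSdef
    have hSstab : ∀ g : Lᵐᵒᵖ, ∀ x ∈ S, g • x ∈ S := by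
      intro g x hx
      have hmap : S.map (DistribMulAction.toLinearMap (ZMod p) M g) ≤ S := by
        rw [hSdef, Submodule.map_span, Submodule.span_le]
        rintro _ ⟨_, ⟨h, rfl⟩, rfl⟩
        exact Submodule.subset_span ⟨g * h, mul_smul g h m⟩
      exact hmap (Submodule.mem_map_of_mem hx)
    have hmS : m ∈ S := Submodule.subset_span ⟨1, one_smul _ m⟩
    haveI : Nontrivial S :=
      ⟨⟨⟨m, hmS⟩, 0, fun h => hm0 (by simpa using congrArg Subtype.val h)⟩⟩
    let ρ : Lᵐᵒᵖ →* Module.End (ZMod p) S :=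
      { toFun := fun g => (DistribMulAction.toLinearMap (ZMod p) M g).restrict (hSstab g)
        map_one' := LinearMap.ext fun x => Subtype.ext (by
          simp [LinearMap.restrict_coe_apply, DistribMulAction.toLinearMap])
        map_mul' := fun g h => LinearMap.ext fun x => Subtype.ext (by
          simp [LinearMap.restrict_coe_apply, DistribMulAction.toLinearMap, mul_smul]) }
    obtain ⟨v, hvne, hvfix⟩ := aux_exists_fixed hp hpOp ρ
    have hv1fix : (v : M) ∈ fixedSub p L M := by
      intro g
      exact congrArg Subtype.val (hvfix g)
    obtain ⟨c, hc⟩ := hv₀span ⟨(v : M), hv1fix⟩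
    have hcoe : c • m₀ = (v : M) := congrArg Subtype.val hc
    have hcne : c ≠ 0 := by
      rintro rfl
      rw [zero_smul] at hcoe
      exact hvne (Subtype.ext hcoe.symm)
    have hm₀S : m₀ ∈ S := by
      have : m₀ = c⁻¹ • (v : M) := by
        rw [← hcoe, smul_smul, inv_mul_cancel₀ hcne, one_smul]
      rw [this]
      exact S.smul_mem _ v.2
    have hfS : S ≤ LinearMap.ker f := by
      rw [hSdef, Submodule.span_le]
      rintro _ ⟨g, rfl⟩
      have h0 : (φ m).coeff ((unop g)⁻¹) = 0 := by rw [hm]; rfl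
      rw [hφapp] at h0
      simp only [inv_inv, op_unop] at h0
      simpa using h0
    have := hfS hm₀S
    rw [LinearMap.mem_ker, hf] at this
    exact one_ne_zero this
  have hφm₀ : ∀ a : L, (φ m₀).coeff a = 1 := fun a => by rw [hφapp, hm₀fix, hf]
  have hφsurj : Function.Surjective φ := by
    rw [← LinearMap.range_eq_top]
    by_contra hR
    set R := LinearMap.range φ with hRdef
    haveI : Nontrivial (MonoidAlgebra (ZMod p) L ⧸ R) :=
      Submodule.Quotient.nontrivial_iff.mpr hR
    haveI : Finite (MonoidAlgebra (ZMod p) L) :=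
      Finite.of_equiv (L → ZMod p) (Finsupp.equivFunOnFinite.symm.trans MonoidAlgebra.coeffEquiv.symm)
    haveI : Finite (MonoidAlgebra (ZMod p) L ⧸ R) := Quotient.finite _
    have hstab : ∀ g : L, ∀ x ∈ R, x * MonoidAlgebra.of (ZMod p) L g ∈ R := by
      rintro g _ ⟨m, rfl⟩
      exact ⟨op g • m, hφmul g m⟩
    let ρ : Lᵐᵒᵖ →* Module.End (ZMod p) (MonoidAlgebra (ZMod p) L ⧸ R) :=
      { toFun := fun g => Submodule.mapQ R R
          (LinearMap.mulRight (ZMod p) (MonoidAlgebra.of (ZMod p) L g.unop))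
          (fun x hx => hstab _ x hx)
        map_one' := by
          refine LinearMap.ext fun q => ?_
          obtain ⟨x, rfl⟩ := Submodule.Quotient.mk_surjective R q
          simp [Submodule.mapQ_apply, ← MonoidAlgebra.one_def]
        map_mul' := fun a b => by
          refine LinearMap.ext fun q => ?_
          obtain ⟨x, rfl⟩ := Submodule.Quotient.mk_surjective R q
          simp [Submodule.mapQ_apply, Module.End.mul_apply, map_mul, mul_assoc] }
    obtain ⟨q, hqne, hqfix⟩ := aux_exists_fixed hp hpOp ρ
    obtain ⟨x, rfl⟩ := Submodule.Quotient.mk_surjective R q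
    have hxR : x ∉ R := fun h => hqne ((Submodule.Quotient.mk_eq_zero R).mpr h)
    have hmem : ∀ g : L, ∃ mg : M, φ mg = x * MonoidAlgebra.of (ZMod p) L g - x := by
      intro g
      have h1 := hqfix (op g)
      rw [show ρ (op g) = Submodule.mapQ R R
          (LinearMap.mulRight (ZMod p) (MonoidAlgebra.of (ZMod p) L g))
          (fun x hx => hstab _ x hx) from rfl] at h1
      replace h1 : Submodule.Quotient.mk (p := R) (x * MonoidAlgebra.of (ZMod p) L g) =
          Submodule.Quotient.mk x := h1
      have h2 := (Submodule.Quotient.eq R).mp h1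
      exact h2
    choose δ hδ using hmem
    have hder : δ ∈ Der p L M := by
      intro a b
      apply hφinj
      rw [map_add, hδ, hφmul, hδ, hδ, map_mul]
      rw [sub_mul, mul_assoc]
      abel
    obtain ⟨n, hn⟩ := hH1 hder
    have hz : ∀ g : L, (x - φ n) * MonoidAlgebra.of (ZMod p) L g = x - φ n := by
      intro g
      have h1 : φ (δ g) = φ n * MonoidAlgebra.of (ZMod p) L g - φ n := by
        rw [hn g, map_sub, hφmul]
      rw [hδ g] at h1
      have h2 : x * MonoidAlgebra.of (ZMod p) L g - φ n * MonoidAlgebra.of (ZMod p) L g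
          = x - φ n := by
        calc x * MonoidAlgebra.of (ZMod p) L g - φ n * MonoidAlgebra.of (ZMod p) L g
            = (x * MonoidAlgebra.of (ZMod p) L g - x)
              - (φ n * MonoidAlgebra.of (ZMod p) L g - φ n) + (x - φ n) := by abel
          _ = x - φ n := by rw [← h1, sub_self, zero_add]
      rw [sub_mul, h2]
    set z := x - φ n with hzdef
    have hzconst : ∀ a : L, z.coeff a = z.coeff 1 := by
      intro a
      have h2 := Finsupp.ext_iff.mp (congrArg MonoidAlgebra.coeff (hz a)) a
      rw [MonoidAlgebra.of_apply, MonoidAlgebra.coeff_mul_single_apply, mul_inv_cancel,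
        mul_one] at h2
      exact h2.symm
    have hzR : z ∈ R := by
      have : z = φ ((z.coeff 1) • m₀) := by
        rw [map_smul]
        refine MonoidAlgebra.ext <| Finsupp.ext fun a => ?_
        rw [MonoidAlgebra.coeff_smul, Finsupp.smul_apply, hφm₀, smul_eq_mul, mul_one, hzconst a]
      rw [this]
      exact LinearMap.mem_range_self φ _
    refine hxR ?_
    have hxz : x = z + φ n := by rw [hzdef]; abel
    rw [hxz]
    exact R.add_mem hzR (LinearMap.mem_range_self φ n)
  refine ⟨LinearEquiv.ofBijective φ ⟨hφinj, hφsurj⟩, fun g m => ?_⟩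
  show φ (op g • m) = φ m * MonoidAlgebra.of (ZMod p) L g
  exact hφmul g m
end

section
/- Let F be a free group with basis X, and let M be an abelian group equipped with an action of F by automorphisms. Then for every function f: X → M there exists a derivation τ: F → M (i.e. a map with τ(xy) = τ(x)·y + τ(y) for all x,y ∈ F) such that τ(x) = f(x) for all x ∈ X. -/
open MulOpposite

/-- Auxiliary semidirect-product-like group `M ⋊ F` for a right action of `F` on `M`. -/
structure DerAux (X M : Type*) where
  m : M
  g : FreeGroup X

section

variable {X M : Type*} [AddCommGroup M] [DistribMulAction (FreeGroup X)ᵐᵒᵖ M]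

instance : Mul (DerAux X M) := ⟨fun a b => ⟨op b.g • a.m + b.m, a.g * b.g⟩⟩
instance : One (DerAux X M) := ⟨⟨0, 1⟩⟩
instance : Inv (DerAux X M) := ⟨fun a => ⟨-(op a.g⁻¹ • a.m), a.g⁻¹⟩⟩

@[simp] lemma DerAux.mul_m (a b : DerAux X M) : (a * b).m = op b.g • a.m + b.m := rfl
@[simp] lemma DerAux.mul_g (a b : DerAux X M) : (a * b).g = a.g * b.g := rfl
@[simp] lemma DerAux.one_m : (1 : DerAux X M).m = 0 := rfl
@[simp] lemma DerAux.one_g : (1 : DerAux X M).g = 1 := rfl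
@[simp] lemma DerAux.inv_m (a : DerAux X M) : a⁻¹.m = -(op a.g⁻¹ • a.m) := rfl
@[simp] lemma DerAux.inv_g (a : DerAux X M) : a⁻¹.g = a.g⁻¹ := rfl

@[ext] lemma DerAux.ext {a b : DerAux X M} (h1 : a.m = b.m) (h2 : a.g = b.g) : a = b := by
  cases a; cases b; simp_all

instance DerAux.group : Group (DerAux X M) where
  mul_assoc a b c := by
    ext <;> simp [smul_add, mul_assoc, add_assoc, op_mul, mul_smul]
  one_mul a := by ext <;> simp
  mul_one a := by ext <;> simp
  inv_mul_cancel a := by ext <;> simp [← mul_smul, ← op_mul]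

/-- The projection to the group part is a homomorphism. -/
def DerAux.proj : DerAux X M →* FreeGroup X where
  toFun a := a.g
  map_one' := rfl
  map_mul' _ _ := rfl

end

/-- Let `F` be a free group with basis `X`, and `M` an abelian group with a right action
of `F` by automorphisms (encoded as a left action of `Fᵐᵒᵖ`).  Every function
`f : X → M` extends to a derivation `τ : F → M` (`τ(xy) = τ(x)·y + τ(y)`). -/
theorem freeGroup_exists_derivation_extending
    {X M : Type*} [AddCommGroup M] [DistribMulAction (FreeGroup X)ᵐᵒᵖ M]
    (f : X → M) :
    ∃ τ : FreeGroup X → M,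
      (∀ x y : FreeGroup X, τ (x * y) = op y • τ x + τ y) ∧
      ∀ x : X, τ (FreeGroup.of x) = f x := by
  let φ : FreeGroup X →* DerAux X M :=
    FreeGroup.lift (fun x => ⟨f x, FreeGroup.of x⟩)
  have hg : ∀ g : FreeGroup X, (φ g).g = g := by
    have : (DerAux.proj).comp φ = MonoidHom.id (FreeGroup X) := by
      apply FreeGroup.ext_hom
      intro x
      simp [φ, DerAux.proj]
    intro g
    exact DFunLike.congr_fun this g
  refine ⟨fun g => (φ g).m, ?_, ?_⟩
  · intro x y
    show (φ (x * y)).m = _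
    rw [map_mul, DerAux.mul_m, hg]
  · intro x
    simp [φ]
end

section
/- Let p be an odd prime, d ≥ 2, and D the relatively free group of exponent p and nilpotency class 2 on generators y₁,…,y_d (a finite p-group of exponent p and class at most 2 with |D/Φ(D)| = p^d and |Φ(D)| = p^{d(d−1)/2}). Let A be the F_p-vector space with basis {a, r₁, …, r_d}, made into a D-module by a·g = a and r_j·g = r_j − χ_j(g)·a for all g ∈ D, where χ_j: D → F_p is the unique homomorphism with χ_j(y_i) = 1 if i = j and χ_j(y_i) = 0 otherwise. Then every function f: {y₁,…,y_d} → A extends to a derivation τ: D → A with τ(y_i) = f(y_i) for all i. -/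
open scoped commutatorElement IsMulCommutative

namespace RFD

variable {G : Type*} [Group G]

theorem central (hc : ∀ a b c : G, ⁅⁅a,b⁆,c⁆ = 1) (a b g : G) :
    g * ⁅a,b⁆ = ⁅a,b⁆ * g := by
  have h := hc a b g
  rw [commutatorElement_def] at h
  have h2 : ⁅a,b⁆ * g * ⁅a,b⁆⁻¹ = g := by
    have := congrArg (· * g) h
    simpa [mul_assoc] using this
  calc g * ⁅a,b⁆ = (⁅a,b⁆ * g * ⁅a,b⁆⁻¹) * ⁅a,b⁆ := by rw [h2]
    _ = ⁅a,b⁆ * g := by group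

theorem comm_mul_left (hc : ∀ a b c : G, ⁅⁅a,b⁆,c⁆ = 1) (a b c : G) :
    ⁅a*b, c⁆ = ⁅a,c⁆ * ⁅b,c⁆ := by
  have h1 : ⁅a*b,c⁆ = a * ⁅b,c⁆ * a⁻¹ * ⁅a,c⁆ := by group
  rw [h1, central hc b c a]
  have h2 : ⁅b,c⁆ * a * a⁻¹ * ⁅a,c⁆ = ⁅b,c⁆ * ⁅a,c⁆ := by group
  rw [h2, central hc a c]

theorem comm_mul_right (hc : ∀ a b c : G, ⁅⁅a,b⁆,c⁆ = 1) (a b c : G) :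
    ⁅c, a*b⁆ = ⁅c,a⁆ * ⁅c,b⁆ := by
  have h1 : ⁅c,a*b⁆ = ⁅c,a⁆ * (a * ⁅c,b⁆ * a⁻¹) := by group
  rw [h1, central hc c b a]
  group

theorem comm_pow_left (hc : ∀ a b c : G, ⁅⁅a,b⁆,c⁆ = 1) (a c : G) (n : ℕ) :
    ⁅a^n, c⁆ = ⁅a,c⁆^n := by
  induction n with
  | zero => simp [commutatorElement_def]
  | succ n ih => rw [pow_succ, comm_mul_left hc, ih, pow_succ]

theorem comm_pow_right (hc : ∀ a b c : G, ⁅⁅a,b⁆,c⁆ = 1) (a c : G) (n : ℕ) :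
    ⁅c, a^n⁆ = ⁅c,a⁆^n := by
  induction n with
  | zero => simp [commutatorElement_def]
  | succ n ih => rw [pow_succ, comm_mul_right hc, ih, pow_succ]

theorem mul_eq (hc : ∀ a b c : G, ⁅⁅a,b⁆,c⁆ = 1) (x y : G) :
    x * y = y * x * ⁅x,y⁆ := by
  rw [central hc x y (y * x)]
  group

theorem comm_pow_eq_one (hc : ∀ a b c : G, ⁅⁅a,b⁆,c⁆ = 1) (a b : G) {q : ℕ}
    (ha : a ^ q = 1) : ⁅a,b⁆ ^ q = 1 := by
  rw [← comm_pow_left hc, ha]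
  simp [commutatorElement_def]

theorem pow_eq_of_mod {g : G} {q a b : ℕ} (hg : g ^ q = 1) (h : a % q = b % q) :
    g ^ a = g ^ b := by
  conv_lhs => rw [← Nat.div_add_mod a q]
  conv_rhs => rw [← Nat.div_add_mod b q]
  rw [pow_add, pow_add, pow_mul, pow_mul, hg, h]
  simp

/-- elements of the center commute with everything -/
theorem zc (z : Subgroup.center G) (x : G) : x * (z : G) = (z : G) * x :=
  Subgroup.mem_center_iff.mp z.2 x

/-- the commutator as an element of the center -/
def cz (hc : ∀ a b c : G, ⁅⁅a,b⁆,c⁆ = 1) (a b : G) : Subgroup.center G :=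
  ⟨⁅a,b⁆, Subgroup.mem_center_iff.mpr fun g => central hc a b g⟩

@[simp] theorem cz_coe (hc : ∀ a b c : G, ⁅⁅a,b⁆,c⁆ = 1) (a b : G) :
    ((cz hc a b : Subgroup.center G) : G) = ⁅a,b⁆ := rfl

/-- ordered product of powers of generators -/
def P : {n : ℕ} → (Fin n → G) → (Fin n → ℕ) → G
  | 0, _, _ => 1
  | _+1, y, u => y 0 ^ u 0 * P (fun i => y i.succ) (fun i => u i.succ)

theorem P_congr {q : ℕ} : ∀ {n : ℕ} (y : Fin n → G) (u w : Fin n → ℕ),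
    (∀ k, y k ^ q = 1) → (∀ k, u k % q = w k % q) → P y u = P y w
  | 0, _, _, _, _, _ => rfl
  | n+1, y, u, w, hq, h => by
    show y 0 ^ u 0 * _ = y 0 ^ w 0 * _
    rw [pow_eq_of_mod (hq 0) (h 0),
      P_congr (fun i => y i.succ) (fun i => u i.succ) (fun i => w i.succ)
        (fun k => hq k.succ) (fun k => h k.succ)]

theorem P_zero : ∀ {n : ℕ} (y : Fin n → G), P y (fun _ => 0) = 1
  | 0, _ => rfl
  | n+1, y => by
    show y 0 ^ 0 * P _ (fun i => 0) = 1
    rw [pow_zero, one_mul, P_zero]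

theorem P_single : ∀ {n : ℕ} (y : Fin n → G) (i : Fin n),
    P y (fun k => if k = i then 1 else 0) = y i
  | n+1, y, i => by
    induction i using Fin.cases with
    | zero =>
      show y 0 ^ (if (0 : Fin (n+1)) = 0 then 1 else 0) *
        P (fun i => y i.succ) (fun i => if i.succ = (0 : Fin (n+1)) then 1 else 0) = y 0
      have h1 : (fun i : Fin n => if i.succ = (0 : Fin (n+1)) then 1 else 0)
          = (fun _ : Fin n => 0) := by
        funext k; simp [Fin.succ_ne_zero]
      rw [if_pos rfl, pow_one, h1, P_zero, mul_one]
    | succ j =>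
      show y 0 ^ (if (0 : Fin (n+1)) = j.succ then 1 else 0) *
        P (fun i => y i.succ) (fun i => if i.succ = j.succ then 1 else 0) = y j.succ
      rw [if_neg (fun h => Fin.succ_ne_zero j h.symm), pow_zero, one_mul]
      have h1 : (fun i : Fin n => if i.succ = j.succ then 1 else 0)
          = (fun i : Fin n => if i = j then 1 else 0) := by
        funext k; simp [Fin.succ_inj]
      rw [h1]
      exact P_single (fun i => y i.succ) j

theorem moveg (hc : ∀ a b c : G, ⁅⁅a,b⁆,c⁆ = 1) :
    ∀ {n : ℕ} (y : Fin n → G) (u : Fin n → ℕ) (g : G),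
    P y u * g = g * P y u * ((∏ a, cz hc (y a) g ^ u a : Subgroup.center G) : G)
  | 0, y, u, g => by simp [P]
  | n+1, y, u, g => by
    have ih := moveg hc (fun i => y i.succ) (fun i => u i.succ) g
    have key : y 0 ^ u 0 * g = g * y 0 ^ u 0 * ⁅y 0, g⁆ ^ u 0 := by
      rw [mul_eq hc (y 0 ^ u 0) g, comm_pow_left hc]
    set P' : G := P (fun i => y i.succ) (fun i => u i.succ) with hP'
    set C' : Subgroup.center G := ∏ a : Fin n, cz hc (y a.succ) g ^ u a.succ with hC'
    have hzc : ∀ x : G, x * ⁅y 0, g⁆ ^ u 0 = ⁅y 0, g⁆ ^ u 0 * x := by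
      intro x
      have := zc ((cz hc (y 0) g) ^ u 0) x
      simpa using this
    show y 0 ^ u 0 * P' * g = g * (y 0 ^ u 0 * P') * _
    rw [Fin.prod_univ_succ]
    calc y 0 ^ u 0 * P' * g = y 0 ^ u 0 * (P' * g) := by rw [mul_assoc]
      _ = y 0 ^ u 0 * (g * P' * (C' : G)) := by rw [ih]
      _ = (y 0 ^ u 0 * g) * (P' * (C' : G)) := by group
      _ = (g * y 0 ^ u 0 * ⁅y 0, g⁆ ^ u 0) * (P' * (C' : G)) := by rw [key]
      _ = g * (y 0 ^ u 0 * (⁅y 0, g⁆ ^ u 0 * P')) * (C' : G) := by group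
      _ = g * (y 0 ^ u 0 * (P' * ⁅y 0, g⁆ ^ u 0)) * (C' : G) := by rw [← hzc P']
      _ = g * (y 0 ^ u 0 * P') * (⁅y 0, g⁆ ^ u 0 * (C' : G)) := by group
      _ = g * (y 0 ^ u 0 * P') *
          ((cz hc (y 0) g ^ u 0 * C' : Subgroup.center G) : G) := by
        push_cast
        rfl

theorem cz_self (hc : ∀ a b c : G, ⁅⁅a,b⁆,c⁆ = 1) (a : G) :
    cz hc a a = 1 := by
  apply Subtype.ext
  simp

theorem Pmul (hc : ∀ a b c : G, ⁅⁅a,b⁆,c⁆ = 1) :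
    ∀ {n : ℕ} (y : Fin n → G) (u v : Fin n → ℕ),
    P y u * P y v = P y (fun k => u k + v k) *
      ((∏ a, ∏ b, cz hc (y a) (y b) ^ (if b < a then u a * v b else 0) :
        Subgroup.center G) : G)
  | 0, y, u, v => by simp [P]
  | n+1, y, u, v => by
    have ih := Pmul hc (fun i => y i.succ) (fun i => u i.succ) (fun i => v i.succ)
    have mg := moveg hc y u (y 0 ^ v 0)
    set P'u : G := P (fun i => y i.succ) (fun i => u i.succ) with hP'u
    set P'v : G := P (fun i => y i.succ) (fun i => v i.succ) with hP'v
    set C0 : Subgroup.center G := ∏ a : Fin (n+1), cz hc (y a) (y 0) ^ (u a * v 0)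
      with hC0
    set C' : Subgroup.center G := ∏ a : Fin n, ∏ b : Fin n,
      cz hc (y a.succ) (y b.succ) ^ (if b < a then u a.succ * v b.succ else 0)
      with hC'2
    have hcz : (∏ a : Fin (n+1), cz hc (y a) (y 0 ^ v 0) ^ u a) = C0 := by
      rw [hC0]
      refine Finset.prod_congr rfl fun a _ => ?_
      apply Subtype.ext
      push_cast
      rw [cz_coe, cz_coe, comm_pow_right hc, ← pow_mul, Nat.mul_comm (v 0) (u a)]
    have hbig : (∏ a : Fin (n+1), ∏ b : Fin (n+1),
        cz hc (y a) (y b) ^ (if b < a then u a * v b else 0)) = C0 * C' := by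
      have inner : ∀ a : Fin (n+1), (∏ b : Fin (n+1),
          cz hc (y a) (y b) ^ (if b < a then u a * v b else 0)) =
          cz hc (y a) (y 0) ^ (u a * v 0) *
          ∏ b : Fin n, cz hc (y a) (y b.succ) ^
            (if b.succ < a then u a * v b.succ else 0) := by
        intro a
        rw [Fin.prod_univ_succ]
        congr 1
        by_cases h : (0 : Fin (n+1)) < a
        · rw [if_pos h]
        · have ha : a = 0 := by
            rcases Fin.eq_zero_or_eq_succ a with h0 | ⟨j, rfl⟩
            · exact h0
            · exact absurd (Fin.succ_pos j) h
          rw [if_neg h, ha, cz_self]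
          simp
      calc (∏ a : Fin (n+1), ∏ b : Fin (n+1),
          cz hc (y a) (y b) ^ (if b < a then u a * v b else 0))
          = ∏ a : Fin (n+1), (cz hc (y a) (y 0) ^ (u a * v 0) *
            ∏ b : Fin n, cz hc (y a) (y b.succ) ^
              (if b.succ < a then u a * v b.succ else 0)) :=
            Finset.prod_congr rfl fun a _ => inner a
        _ = C0 * ∏ a : Fin (n+1), ∏ b : Fin n, cz hc (y a) (y b.succ) ^
              (if b.succ < a then u a * v b.succ else 0) := by
            rw [Finset.prod_mul_distrib, hC0]
        _ = C0 * C' := by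
            congr 1
            rw [Fin.prod_univ_succ]
            have h0 : (∏ b : Fin n, cz hc (y 0) (y b.succ) ^
                (if b.succ < (0 : Fin (n+1)) then u 0 * v b.succ else 0)) = 1 := by
              apply Finset.prod_eq_one
              intro b _
              rw [if_neg (Fin.not_lt_zero _), pow_zero]
            rw [h0, one_mul, hC'2]
            refine Finset.prod_congr rfl fun a _ => Finset.prod_congr rfl fun b _ => ?_
            simp only [Fin.succ_lt_succ_iff]
    have hPu : P y u = y 0 ^ u 0 * P'u := rfl
    have hpow : y 0 ^ v 0 * y 0 ^ u 0 = y 0 ^ (u 0 + v 0) := by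
      rw [← pow_add, Nat.add_comm (v 0) (u 0)]
    show P y u * (y 0 ^ v 0 * P'v) = _
    rw [hbig]
    calc P y u * (y 0 ^ v 0 * P'v)
        = (P y u * y 0 ^ v 0) * P'v := by rw [← mul_assoc]
      _ = (y 0 ^ v 0 * P y u *
          ((∏ a : Fin (n+1), cz hc (y a) (y 0 ^ v 0) ^ u a :
            Subgroup.center G) : G)) * P'v := by rw [mg]
      _ = y 0 ^ v 0 * P y u * ((C0 : G)) * P'v := by rw [hcz]
      _ = y 0 ^ v 0 * P y u * (P'v * (C0 : G)) := by
          rw [mul_assoc (y 0 ^ v 0 * P y u) ((C0 : G)) P'v, ← zc C0 P'v]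
      _ = (y 0 ^ v 0 * (y 0 ^ u 0 * P'u)) * (P'v * (C0 : G)) := by rw [← hPu]
      _ = (y 0 ^ v 0 * y 0 ^ u 0) * (P'u * P'v) * (C0 : G) := by group
      _ = y 0 ^ (u 0 + v 0) * (P'u * P'v) * (C0 : G) := by rw [hpow]
      _ = y 0 ^ (u 0 + v 0) * ((P (fun i => y i.succ)
            fun k => u k.succ + v k.succ) * (C' : G)) * (C0 : G) := by rw [ih]
      _ = y 0 ^ (u 0 + v 0) * (P (fun i => y i.succ)
            fun k => u k.succ + v k.succ) * ((C0 * C' : Subgroup.center G) : G) := by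
          push_cast
          rw [zc C' ((C0 : G))]
          group
      _ = P y (fun k => u k + v k) * ((C0 * C' : Subgroup.center G) : G) := rfl

theorem Cprod_congr (hc : ∀ a b c : G, ⁅⁅a,b⁆,c⁆ = 1) {q : ℕ} {n : ℕ}
    (y : Fin n → G) (hq : ∀ k, y k ^ q = 1) (s t : Fin n → Fin n → ℕ)
    (h : ∀ a b, s a b % q = t a b % q) :
    (∏ a, ∏ b, cz hc (y a) (y b) ^ s a b)
      = ∏ a, ∏ b, cz hc (y a) (y b) ^ t a b := by
  refine Finset.prod_congr rfl fun a _ => Finset.prod_congr rfl fun b _ => ?_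
  have hcz1 : cz hc (y a) (y b) ^ q = 1 := by
    apply Subtype.ext
    rw [SubmonoidClass.coe_pow, cz_coe, OneMemClass.coe_one]
    exact comm_pow_eq_one hc _ _ (hq a)
  exact pow_eq_of_mod hcz1 (h a b)

theorem Cprod_add (hc : ∀ a b c : G, ⁅⁅a,b⁆,c⁆ = 1) {n : ℕ}
    (y : Fin n → G) (s t : Fin n → Fin n → ℕ) :
    (∏ a, ∏ b, cz hc (y a) (y b) ^ (s a b + t a b))
      = (∏ a, ∏ b, cz hc (y a) (y b) ^ s a b)
        * ∏ a, ∏ b, cz hc (y a) (y b) ^ t a b := by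
  rw [← Finset.prod_mul_distrib]
  refine Finset.prod_congr rfl fun a _ => ?_
  rw [← Finset.prod_mul_distrib]
  exact Finset.prod_congr rfl fun b _ => pow_add _ _ _

/-- the exponent matrix of a "strictly lower triangular" coefficient vector -/
def E {p d : ℕ} (s : {x : Fin d × Fin d // x.2 < x.1} → ZMod p) :
    Fin d → Fin d → ℕ :=
  fun a b => if h : b < a then (s ⟨(a,b), h⟩).val else 0

/-- the normal-form parametrization of the group -/
def psi {p d : ℕ} (hc : ∀ a b c : G, ⁅⁅a,b⁆,c⁆ = 1) (y : Fin d → G)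
    (w : (Fin d → ZMod p) × ({x : Fin d × Fin d // x.2 < x.1} → ZMod p)) : G :=
  P y (fun k => (w.1 k).val) *
    ((∏ a, ∏ b, cz hc (y a) (y b) ^ E w.2 a b : Subgroup.center G) : G)

theorem psi_mul {p d : ℕ} [NeZero p] (hc : ∀ a b c : G, ⁅⁅a,b⁆,c⁆ = 1)
    (y : Fin d → G) (hexp : ∀ g : G, g ^ p = 1)
    (w1 w2 : (Fin d → ZMod p) × ({x : Fin d × Fin d // x.2 < x.1} → ZMod p)) :
    psi hc y w1 * psi hc y w2 =
      psi hc y (w1.1 + w2.1,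
        w1.2 + w2.2 + fun x => w1.1 x.1.1 * w2.1 x.1.2) := by
  have hyq : ∀ k, y k ^ p = 1 := fun k => hexp (y k)
  set Z1 : Subgroup.center G := ∏ a, ∏ b, cz hc (y a) (y b) ^ E w1.2 a b with hZ1
  set Z2 : Subgroup.center G := ∏ a, ∏ b, cz hc (y a) (y b) ^ E w2.2 a b with hZ2
  set u1 : Fin d → ℕ := fun k => (w1.1 k).val with hu1
  set u2 : Fin d → ℕ := fun k => (w2.1 k).val with hu2
  set Q : Subgroup.center G := ∏ a, ∏ b, cz hc (y a) (y b) ^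
    (if b < a then u1 a * u2 b else 0) with hQ
  have step1 : psi hc y w1 * psi hc y w2
      = (P y u1 * P y u2) * ((Z1 : G) * (Z2 : G)) := by
    show (P y u1 * (Z1 : G)) * (P y u2 * (Z2 : G)) = _
    rw [mul_assoc, ← mul_assoc (Z1 : G), ← zc Z1 (P y u2)]
    group
  rw [step1, Pmul hc y u1 u2, ← hQ]
  have step2 : (P y (fun k => u1 k + u2 k) * (Q : G)) * ((Z1 : G) * (Z2 : G))
      = P y (fun k => u1 k + u2 k) * ((Q * Z1 * Z2 : Subgroup.center G) : G) := by
    push_cast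
    group
  rw [step2]
  have hP : P y (fun k => u1 k + u2 k) = P y (fun k => ((w1.1 + w2.1) k).val) := by
    refine P_congr y _ _ hyq (fun k => ?_)
    show (u1 k + u2 k) % p = ((w1.1 + w2.1) k).val % p
    rw [Pi.add_apply, ZMod.val_add, Nat.mod_mod_of_dvd _ dvd_rfl]
  have hZ : Q * Z1 * Z2 = ∏ a, ∏ b, cz hc (y a) (y b) ^
      E (w1.2 + w2.2 + fun x => w1.1 x.1.1 * w2.1 x.1.2) a b := by
    rw [hQ, hZ1, hZ2, ← Cprod_add hc, ← Cprod_add hc]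
    refine Cprod_congr hc y hyq _ _ (fun a b => ?_)
    by_cases h : b < a
    · show ((if b < a then u1 a * u2 b else 0) + E w1.2 a b + E w2.2 a b) % p
        = E (w1.2 + w2.2 + fun x => w1.1 x.1.1 * w2.1 x.1.2) a b % p
      unfold E
      rw [if_pos h, dif_pos h, dif_pos h, dif_pos h]
      show ((w1.1 a).val * (w2.1 b).val + (w1.2 ⟨(a,b),h⟩).val
          + (w2.2 ⟨(a,b),h⟩).val) % p
        = ((w1.2 ⟨(a,b),h⟩ + w2.2 ⟨(a,b),h⟩ + w1.1 a * w2.1 b)).val % p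
      rw [ZMod.val_add, ZMod.val_add, ZMod.val_mul]
      generalize (w1.1 a).val * (w2.1 b).val = A
      generalize (w1.2 ⟨(a,b),h⟩).val = B
      generalize (w2.2 ⟨(a,b),h⟩).val = C
      rw [← Nat.add_mod, show B + C + A = A + B + C from by ring,
        Nat.mod_mod_of_dvd _ dvd_rfl]
    · show ((if b < a then u1 a * u2 b else 0) + E w1.2 a b + E w2.2 a b) % p
        = E (w1.2 + w2.2 + fun x => w1.1 x.1.1 * w2.1 x.1.2) a b % p
      unfold E
      rw [if_neg h, dif_neg h, dif_neg h, dif_neg h]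
  rw [hP, hZ]
  rfl

theorem psi_one {p d : ℕ} [NeZero p] (hc : ∀ a b c : G, ⁅⁅a,b⁆,c⁆ = 1)
    (y : Fin d → G) : psi (p := p) hc y (0, 0) = 1 := by
  unfold psi
  have h1 : (fun k => ((0 : Fin d → ZMod p) k).val) = fun _ : Fin d => 0 := by
    funext k; simp
  rw [h1, P_zero]
  have h2 : ∀ a b : Fin d,
      E ((0 : { x : Fin d × Fin d // x.2 < x.1 } → ZMod p)) a b = 0 := by
    intro a b; unfold E; split <;> simp
  simp [h2]

theorem psi_single {p d : ℕ} [NeZero p] (hp1 : 1 < p)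
    (hc : ∀ a b c : G, ⁅⁅a,b⁆,c⁆ = 1) (y : Fin d → G) (i : Fin d) :
    psi (p := p) hc y ((fun k => if k = i then 1 else 0), 0) = y i := by
  haveI : Fact (1 < p) := ⟨hp1⟩
  unfold psi
  have h1 : (fun k => ((if k = i then (1 : ZMod p) else 0)).val)
      = fun k : Fin d => if k = i then 1 else 0 := by
    funext k
    split
    · exact ZMod.val_one p
    · simp
  rw [h1, P_single]
  have h2 : ∀ a b : Fin d,
      E ((0 : { x : Fin d × Fin d // x.2 < x.1 } → ZMod p)) a b = 0 := by
    intro a b; unfold E; split <;> simp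
  simp [h2]

theorem chi_one {p : ℕ} (χ : G → ZMod p)
    (hadd : ∀ g h, χ (g*h) = χ g + χ h) : χ 1 = 0 := by
  have h := hadd 1 1
  rw [one_mul] at h
  linear_combination -h

theorem chi_inv {p : ℕ} (χ : G → ZMod p)
    (hadd : ∀ g h, χ (g*h) = χ g + χ h) (g : G) : χ g⁻¹ = - χ g := by
  have h := hadd g g⁻¹
  rw [mul_inv_cancel, chi_one χ hadd] at h
  linear_combination -h

theorem chi_comm {p : ℕ} (χ : G → ZMod p)
    (hadd : ∀ g h, χ (g*h) = χ g + χ h) (a b : G) : χ ⁅a,b⁆ = 0 := by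
  rw [commutatorElement_def, hadd, hadd, hadd, chi_inv χ hadd, chi_inv χ hadd]
  ring

theorem chi_pow {p : ℕ} (χ : G → ZMod p)
    (hadd : ∀ g h, χ (g*h) = χ g + χ h) (g : G) (m : ℕ) :
    χ (g ^ m) = (m : ZMod p) * χ g := by
  induction m with
  | zero => simp [chi_one χ hadd]
  | succ m ih => rw [pow_succ, hadd, ih, Nat.cast_succ]; ring

theorem chi_P {p : ℕ} (χ : G → ZMod p)
    (hadd : ∀ g h, χ (g*h) = χ g + χ h) :
    ∀ {n : ℕ} (y : Fin n → G) (u : Fin n → ℕ),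
    χ (P y u) = ∑ k, (u k : ZMod p) * χ (y k)
  | 0, y, u => by simp [P, chi_one χ hadd]
  | n+1, y, u => by
    show χ (y 0 ^ u 0 * P (fun i => y i.succ) (fun i => u i.succ)) = _
    rw [hadd, chi_pow χ hadd, chi_P χ hadd (fun i => y i.succ) (fun i => u i.succ),
      Fin.sum_univ_succ]

theorem card_lower (d : ℕ) :
    Nat.card {x : Fin d × Fin d // x.2 < x.1} = d * (d-1) / 2 := by
  have e : {x : Fin d × Fin d // x.2 < x.1} ≃ Σ a : Fin d, Fin a.val :=
    { toFun := fun x => ⟨x.1.1, ⟨(x.1.2 : ℕ), x.2⟩⟩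
      invFun := fun s => ⟨(s.1, ⟨s.2.val, s.2.isLt.trans s.1.isLt⟩), s.2.isLt⟩
      left_inv := by rintro ⟨⟨a, ⟨bv, hb⟩⟩, h⟩; rfl
      right_inv := by rintro ⟨a, ⟨jv, hj⟩⟩; rfl }
  rw [Nat.card_congr e, Nat.card_eq_fintype_card, Fintype.card_sigma]
  have h1 : ∀ a : Fin d, Fintype.card (Fin a.val) = a.val := fun a => Fintype.card_fin _
  rw [Finset.sum_congr rfl (fun a _ => h1 a),
    Fin.sum_univ_eq_sum_range (fun i => i) d, Finset.sum_range_id]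

theorem sum_lower {M : Type*} [AddCommMonoid M] {d : ℕ} (F : Fin d × Fin d → M) :
    (∑ x : {x : Fin d × Fin d // x.2 < x.1}, F x.1)
      = ∑ a : Fin d, ∑ b : Fin d, if b < a then F (a, b) else 0 := by
  rw [← Finset.sum_subtype
    (Finset.univ.filter fun x : Fin d × Fin d => x.2 < x.1) (by simp) F]
  rw [Finset.sum_filter, Fintype.sum_prod_type]

end RFD


/- `D` is the relatively free group of exponent `p` and nilpotency class 2 on `d`
generators `y 0, …, y (d-1)`: a finite group of exponent `p`, class at most 2
(`γ₃(D) = 1`), generated by the `y i`, with `|D/Φ(D)| = p^d` and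
`|Φ(D)| = p^(d(d-1)/2)`.

The module `A` is the `F_p`-vector space with basis `{a, r₁, …, r_d}`, realized as
`ZMod p × (Fin d → ZMod p)` with `a = (1, 0)` and `r_j = (0, e_j)`; the (right)
`D`-action is `a·g = a`, `r_j·g = r_j − χ_j(g)·a`, i.e.
`(c, v)·g = (c − ∑ j, v j * χ j g, v)`, where `χ j : D → F_p` is the unique
homomorphism with `χ j (y i) = 1` if `i = j` and `0` otherwise. -/

/-- Every function `f` on the generators extends to a derivation `τ : D → A`
(`τ(gh) = τ(g)·h + τ(h)`). -/
theorem relativelyFree_exists_derivation_extending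
    {p d : ℕ} (hp : p.Prime) (hodd : Odd p) (hd : 2 ≤ d)
    {D : Type*} [Group D] [Finite D]
    (hexp : ∀ g : D, g ^ p = 1)
    (hclass : (⊤ : Subgroup D).lowerCentralSeries 2 = ⊥)
    (y : Fin d → D)
    (hgen : Subgroup.closure (Set.range y) = ⊤)
    (hq : (frattini D).index = p ^ d)
    (hphi : Nat.card ↥(frattini D) = p ^ (d * (d - 1) / 2))
    (χ : Fin d → D → ZMod p)
    (hχ : ∀ (j : Fin d) (g h : D), χ j (g * h) = χ j g + χ j h)
    (hχy : ∀ j i : Fin d, χ j (y i) = if i = j then 1 else 0)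
    (f : Fin d → ZMod p × (Fin d → ZMod p)) :
    ∃ τ : D → ZMod p × (Fin d → ZMod p),
      (∀ g h : D, τ (g * h) =
        ((τ g).1 - (∑ j, (τ g).2 j * χ j h) + (τ h).1, (τ g).2 + (τ h).2)) ∧
      ∀ i : Fin d, τ (y i) = f i := by
  classical
  haveI hfp : Fact p.Prime := ⟨hp⟩
  haveI : NeZero p := ⟨hp.ne_zero⟩
  have hp1 : 1 < p := hp.one_lt
  -- class ≤ 2 : commutators are central
  have hc : ∀ a b c : D, ⁅⁅a,b⁆,c⁆ = 1 := by
    intro a b c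
    have h1 : ⁅a,b⁆ ∈ (⊤ : Subgroup D).lowerCentralSeries 1 := by
      rw [lowerCentralSeries_succ]
      exact Subgroup.subset_closure
        ⟨a, by rw [lowerCentralSeries_zero]; trivial, b, trivial, rfl⟩
    have h2 : ⁅⁅a,b⁆,c⁆ ∈ (⊤ : Subgroup D).lowerCentralSeries 2 := by
      rw [lowerCentralSeries_succ]
      exact Subgroup.subset_closure ⟨⁅a,b⁆, h1, c, trivial, rfl⟩
    rw [hclass] at h2
    exact Subgroup.mem_bot.mp h2
  -- the normal form bijection
  have hψbij : Function.Bijective (RFD.psi (p := p) hc y) := by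
    rw [Nat.bijective_iff_surjective_and_card]
    constructor
    · -- surjectivity
      have hpowmem : ∀ (m : ℕ) w, ∃ w', RFD.psi (p := p) hc y w ^ m
          = RFD.psi (p := p) hc y w' := by
        intro m
        induction m with
        | zero => exact fun w => ⟨(0,0), by rw [pow_zero, RFD.psi_one hc y]⟩
        | succ m ih =>
          intro w
          obtain ⟨w', hw'⟩ := ih w
          exact ⟨_, by rw [pow_succ, hw', RFD.psi_mul hc y hexp w' w]⟩
      set H : Subgroup D :=
        { carrier := Set.range (RFD.psi (p := p) hc y)
          one_mem' := ⟨(0,0), RFD.psi_one hc y⟩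
          mul_mem' := by
            rintro a b ⟨w1, rfl⟩ ⟨w2, rfl⟩
            exact ⟨_, (RFD.psi_mul hc y hexp w1 w2).symm⟩
          inv_mem' := by
            rintro a ⟨w, rfl⟩
            obtain ⟨w', hw'⟩ := hpowmem (p-1) w
            refine ⟨w', ?_⟩
            rw [← hw']
            symm
            apply inv_eq_of_mul_eq_one_right
            rw [← pow_succ']
            rw [Nat.sub_add_cancel hp.pos]
            exact hexp _ } with hH
      intro g
      have hmem : g ∈ H := by
        have htop : (⊤ : Subgroup D) ≤ H := by
          rw [← hgen, Subgroup.closure_le]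
          rintro _ ⟨i, rfl⟩
          exact ⟨_, RFD.psi_single hp1 hc y i⟩
        exact htop trivial
      exact hmem
    · -- cardinalities agree
      have hcardD : Nat.card D = p ^ d * p ^ (d*(d-1)/2) := by
        have h := Subgroup.card_mul_index (frattini D)
        rw [hphi, hq] at h
        rw [← h]
        ring
      rw [Nat.card_prod, hcardD]
      have c1 : Nat.card (Fin d → ZMod p) = p ^ d := by
        rw [Nat.card_eq_fintype_card, Fintype.card_fun, ZMod.card, Fintype.card_fin]
      have c2 : Nat.card ({x : Fin d × Fin d // x.2 < x.1} → ZMod p)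
          = p ^ (d*(d-1)/2) := by
        rw [Nat.card_eq_fintype_card, Fintype.card_fun, ZMod.card,
          ← Nat.card_eq_fintype_card, RFD.card_lower]
      rw [c1, c2]
  set σ := (Equiv.ofBijective _ hψbij).symm with hσdef
  have hψσ : ∀ g : D, RFD.psi (p := p) hc y (σ g) = g := fun g =>
    (Equiv.ofBijective _ hψbij).apply_symm_apply g
  have hσψ : ∀ w, σ (RFD.psi (p := p) hc y w) = w := fun w =>
    (Equiv.ofBijective _ hψbij).symm_apply_apply w
  have hσmul : ∀ g h : D, σ (g * h) =
      ((σ g).1 + (σ h).1,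
        (σ g).2 + (σ h).2 + fun x => (σ g).1 x.1.1 * (σ h).1 x.1.2) := by
    intro g h
    conv_lhs => rw [← hψσ g, ← hψσ h]
    rw [RFD.psi_mul hc y hexp]
    exact hσψ _
  have hσy : ∀ i : Fin d, σ (y i) = ((fun k => if k = i then 1 else 0), 0) := by
    intro i
    rw [← RFD.psi_single hp1 hc y i, hσψ]
  -- χ is given by the first normal-form coordinate
  have hχu : ∀ (j : Fin d) (g : D), χ j g = (σ g).1 j := by
    intro j g
    conv_lhs => rw [← hψσ g]
    show χ j (RFD.P y (fun k => ((σ g).1 k).val) * _) = _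
    rw [hχ, RFD.chi_P (χ j) (hχ j) y]
    have hZ : χ j ((∏ a, ∏ b, RFD.cz hc (y a) (y b) ^ RFD.E (σ g).2 a b :
        Subgroup.center D) : D) = 0 := by
      refine Finset.prod_induction _ (fun z : Subgroup.center D => χ j (z : D) = 0)
        (fun z1 z2 h1 h2 => by
          show χ j ((z1 * z2 : Subgroup.center D) : D) = 0
          rw [Subgroup.coe_mul, hχ]
          show χ j _ + χ j _ = 0
          rw [show χ j (z1 : D) = 0 from h1, show χ j (z2 : D) = 0 from h2, add_zero])
        (by
          show χ j ((1 : Subgroup.center D) : D) = 0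
          rw [OneMemClass.coe_one]; exact RFD.chi_one (χ j) (hχ j)) ?_
      intro a _
      refine Finset.prod_induction _ (fun z : Subgroup.center D => χ j (z : D) = 0)
        (fun z1 z2 h1 h2 => by
          show χ j ((z1 * z2 : Subgroup.center D) : D) = 0
          rw [Subgroup.coe_mul, hχ]
          show χ j _ + χ j _ = 0
          rw [show χ j (z1 : D) = 0 from h1, show χ j (z2 : D) = 0 from h2, add_zero])
        (by
          show χ j ((1 : Subgroup.center D) : D) = 0
          rw [OneMemClass.coe_one]; exact RFD.chi_one (χ j) (hχ j)) ?_
      intro b _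
      rw [SubmonoidClass.coe_pow, RFD.cz_coe, RFD.chi_pow (χ j) (hχ j),
        RFD.chi_comm (χ j) (hχ j), mul_zero]
    rw [hZ, add_zero]
    have : ∀ k : Fin d, (((σ g).1 k).val : ZMod p) * χ j (y k)
        = if k = j then (σ g).1 k else 0 := by
      intro k
      rw [ZMod.natCast_val, ZMod.cast_id, hχy]
      split <;> simp
    rw [Finset.sum_congr rfl fun k _ => this k, Finset.sum_ite_eq' Finset.univ j]
    simp
  -- the coefficients
  set t : Fin d → Fin d → ZMod p := fun a b => -((f a).2 b) with ht
  have hft : ∀ a b : Fin d, (f a).2 b = - t a b := by intro a b; rw [ht]; ring_nf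
  have h2inv : (2 : ZMod p)⁻¹ * 2 = 1 := by
    apply inv_mul_cancel₀
    have : ((2 : ℕ) : ZMod p) ≠ 0 := by
      rw [Ne, ZMod.natCast_eq_zero_iff]
      intro hdvd
      rcases (Nat.prime_dvd_prime_iff_eq hp Nat.prime_two).mp hdvd with rfl
      exact (Nat.not_even_iff_odd.mpr hodd) (even_two)
    simpa using this
  refine ⟨fun g =>
    ((∑ a, ∑ b, if a < b then t a b * (σ g).1 a * (σ g).1 b else 0)
      + (2 : ZMod p)⁻¹ * (∑ a, t a a * (σ g).1 a * (σ g).1 a)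
      + (∑ x : {x : Fin d × Fin d // x.2 < x.1},
          (t x.1.1 x.1.2 - t x.1.2 x.1.1) * (σ g).2 x)
      + ∑ a, ((f a).1 - (2 : ZMod p)⁻¹ * t a a) * (σ g).1 a,
     fun j => ∑ i, (σ g).1 i * (f i).2 j), ?_, ?_⟩
  · -- derivation property
    intro g h
    refine Prod.ext ?_ ?_
    · dsimp only
      rw [hσmul g h]
      simp only [Pi.add_apply, hχu]
      set u := (σ g).1 with hu
      set v := (σ h).1 with hv
      set sg := (σ g).2 with hsg
      set sh := (σ h).2 with hsh
      have H1 : (∑ a, ∑ b, if a < b then t a b * (u a + v a) * (u b + v b) else 0)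
          = (∑ a, ∑ b, if a < b then t a b * u a * u b else 0)
            + (∑ a, ∑ b, if a < b then t a b * v a * v b else 0)
            + (∑ a, ∑ b, if a < b then t a b * u a * v b else 0)
            + (∑ a, ∑ b, if a < b then t a b * u b * v a else 0) := by
        have cell : ∀ a b : Fin d,
            (if a < b then t a b * (u a + v a) * (u b + v b) else 0)
            = (if a < b then t a b * u a * u b else 0)
              + ((if a < b then t a b * v a * v b else 0)
              + ((if a < b then t a b * u a * v b else 0)
              + (if a < b then t a b * u b * v a else 0))) := by
          intro a b; split
          · ring
          · simp
        rw [Finset.sum_congr rfl fun a _ => Finset.sum_congr rfl fun b _ => cell a b]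
        simp only [Finset.sum_add_distrib]
        ring
      have H2 : (∑ a, t a a * (u a + v a) * (u a + v a))
          = (∑ a, t a a * u a * u a) + (∑ a, t a a * v a * v a)
            + 2 * (∑ a, t a a * u a * v a) := by
        have cell : ∀ a : Fin d, t a a * (u a + v a) * (u a + v a)
            = t a a * u a * u a + (t a a * v a * v a
              + 2 * (t a a * u a * v a)) := by intro a; ring
        rw [Finset.sum_congr rfl fun a _ => cell a]
        simp only [Finset.sum_add_distrib, ← Finset.mul_sum]
        ring
      have H3 : (∑ x : {x : Fin d × Fin d // x.2 < x.1},
            (t x.1.1 x.1.2 - t x.1.2 x.1.1) * (sg x + sh x + u x.1.1 * v x.1.2))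
          = (∑ x : {x : Fin d × Fin d // x.2 < x.1},
              (t x.1.1 x.1.2 - t x.1.2 x.1.1) * sg x)
            + (∑ x : {x : Fin d × Fin d // x.2 < x.1},
              (t x.1.1 x.1.2 - t x.1.2 x.1.1) * sh x)
            + (∑ x : {x : Fin d × Fin d // x.2 < x.1},
              (t x.1.1 x.1.2 - t x.1.2 x.1.1) * (u x.1.1 * v x.1.2)) := by
        have cell : ∀ x : {x : Fin d × Fin d // x.2 < x.1},
            (t x.1.1 x.1.2 - t x.1.2 x.1.1) * (sg x + sh x + u x.1.1 * v x.1.2)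
            = (t x.1.1 x.1.2 - t x.1.2 x.1.1) * sg x
              + ((t x.1.1 x.1.2 - t x.1.2 x.1.1) * sh x
              + (t x.1.1 x.1.2 - t x.1.2 x.1.1) * (u x.1.1 * v x.1.2)) := by
          intro x; ring
        rw [Finset.sum_congr rfl fun x _ => cell x]
        simp only [Finset.sum_add_distrib]
        ring
      have H4 : (∑ x : {x : Fin d × Fin d // x.2 < x.1},
            (t x.1.1 x.1.2 - t x.1.2 x.1.1) * (u x.1.1 * v x.1.2))
          = (∑ a, ∑ b, if b < a then t a b * u a * v b else 0)
            - (∑ a, ∑ b, if b < a then t b a * u a * v b else 0) := by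
        rw [RFD.sum_lower (fun z : Fin d × Fin d =>
          (t z.1 z.2 - t z.2 z.1) * (u z.1 * v z.2))]
        have cell : ∀ a b : Fin d,
            (if b < a then (t a b - t b a) * (u a * v b) else 0)
            = (if b < a then t a b * u a * v b else 0)
              - (if b < a then t b a * u a * v b else 0) := by
          intro a b; split
          · ring
          · simp
        rw [Finset.sum_congr rfl fun a _ => Finset.sum_congr rfl fun b _ => cell a b]
        simp only [Finset.sum_sub_distrib]
      have H5 : (∑ a, ∑ b, if a < b then t a b * u b * v a else 0)
          = ∑ a, ∑ b, if b < a then t b a * u a * v b else 0 := by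
        rw [Finset.sum_comm]
      have H6 : (∑ j, (∑ i, u i * (f i).2 j) * v j)
          = -((∑ a, ∑ b, if a < b then t a b * u a * v b else 0)
            + (∑ a, ∑ b, if a = b then t a b * u a * v b else 0)
            + (∑ a, ∑ b, if b < a then t a b * u a * v b else 0)) := by
        have cell : ∀ i j : Fin d, u i * (f i).2 j * v j
            = -((if i < j then t i j * u i * v j else 0)
              + ((if i = j then t i j * u i * v j else 0)
              + (if j < i then t i j * u i * v j else 0))) := by
          intro i j
          rcases lt_trichotomy i j with h|h|h
          · rw [if_pos h, if_neg h.ne, if_neg (lt_asymm h), hft]; ring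
          · rw [if_neg (by rw [h]; exact lt_irrefl j), if_pos h,
              if_neg (by rw [h]; exact lt_irrefl j), hft]; ring
          · rw [if_neg (lt_asymm h), if_neg (ne_of_gt h), if_pos h, hft]; ring
        calc (∑ j, (∑ i, u i * (f i).2 j) * v j)
            = ∑ j, ∑ i, u i * (f i).2 j * v j :=
              Finset.sum_congr rfl fun j _ => Finset.sum_mul _ _ _
          _ = ∑ i, ∑ j, u i * (f i).2 j * v j := Finset.sum_comm
          _ = ∑ i, ∑ j, -((if i < j then t i j * u i * v j else 0)
              + ((if i = j then t i j * u i * v j else 0)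
              + (if j < i then t i j * u i * v j else 0))) :=
              Finset.sum_congr rfl fun i _ => Finset.sum_congr rfl fun j _ => cell i j
          _ = _ := by
              simp only [Finset.sum_neg_distrib, Finset.sum_add_distrib]
              ring
      have H7 : (∑ a, ∑ b, if a = b then t a b * u a * v b else 0)
          = ∑ a, t a a * u a * v a := by
        refine Finset.sum_congr rfl fun a _ => ?_
        rw [Finset.sum_ite_eq Finset.univ a (fun b => t a b * u a * v b)]
        simp
      have H8 : (∑ a, ((f a).1 - (2 : ZMod p)⁻¹ * t a a) * (u a + v a))
          = (∑ a, ((f a).1 - (2 : ZMod p)⁻¹ * t a a) * u a)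
            + (∑ a, ((f a).1 - (2 : ZMod p)⁻¹ * t a a) * v a) := by
        have cell : ∀ a : Fin d, ((f a).1 - (2 : ZMod p)⁻¹ * t a a) * (u a + v a)
            = ((f a).1 - (2 : ZMod p)⁻¹ * t a a) * u a
              + ((f a).1 - (2 : ZMod p)⁻¹ * t a a) * v a := by intro a; ring
        rw [Finset.sum_congr rfl fun a _ => cell a, Finset.sum_add_distrib]
      linear_combination H1 + (2 : ZMod p)⁻¹ * H2 + H3 + H8 + H4 + H6 + H5
        + (∑ a, t a a * u a * v a) * h2inv - H7
    · dsimp only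
      funext j
      rw [hσmul g h]
      simp only [Pi.add_apply, add_mul, Finset.sum_add_distrib]
  · -- values on generators
    intro i
    refine Prod.ext ?_ ?_
    · dsimp only
      rw [hσy i]
      dsimp only
      have e1 : (∑ a, ∑ b, if a < b then
          t a b * (if a = i then (1 : ZMod p) else 0)
            * (if b = i then 1 else 0) else 0) = 0 := by
        refine Finset.sum_eq_zero fun a _ => Finset.sum_eq_zero fun b _ => ?_
        split_ifs with h1 h2 h3
        · exact absurd h1 (by rw [h2.trans h3.symm]; exact lt_irrefl b)
        · ring
        · ring
        · ring
        · rfl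
      have e2 : (∑ a, t a a * (if a = i then (1 : ZMod p) else 0)
            * (if a = i then 1 else 0)) = t i i := by
        have cell : ∀ a : Fin d, t a a * (if a = i then (1 : ZMod p) else 0)
            * (if a = i then 1 else 0) = if a = i then t a a else 0 := by
          intro a; split <;> ring
        rw [Finset.sum_congr rfl fun a _ => cell a,
          Finset.sum_ite_eq' Finset.univ i (fun a => t a a)]
        simp
      have e3 : (∑ x : {x : Fin d × Fin d // x.2 < x.1},
          (t x.1.1 x.1.2 - t x.1.2 x.1.1)
            * (0 : {x : Fin d × Fin d // x.2 < x.1} → ZMod p) x) = 0 := by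
        simp
      have e4 : (∑ a, ((f a).1 - (2 : ZMod p)⁻¹ * t a a)
            * (if a = i then (1 : ZMod p) else 0))
          = (f i).1 - (2 : ZMod p)⁻¹ * t i i := by
        have cell : ∀ a : Fin d, ((f a).1 - (2 : ZMod p)⁻¹ * t a a)
            * (if a = i then (1 : ZMod p) else 0)
            = if a = i then (f a).1 - (2 : ZMod p)⁻¹ * t a a else 0 := by
          intro a; split <;> ring
        rw [Finset.sum_congr rfl fun a _ => cell a,
          Finset.sum_ite_eq' Finset.univ i
            (fun a => (f a).1 - (2 : ZMod p)⁻¹ * t a a)]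
        simp
      linear_combination e1 + (2 : ZMod p)⁻¹ * e2 + e3 + e4
    · dsimp only
      funext j
      rw [hσy i]
      dsimp only
      have cell : ∀ i' : Fin d, (if i' = i then (1 : ZMod p) else 0) * (f i').2 j
          = if i' = i then (f i').2 j else 0 := by
        intro i'; split <;> ring
      rw [Finset.sum_congr rfl fun i' _ => cell i',
        Finset.sum_ite_eq' Finset.univ i (fun i' => (f i').2 j)]
      simp
end

section
/- Let p be an odd prime and G a finite non-abelian p-group with cyclic center Z(G). If Ω₁(Z(G)) is not contained in γ₃(G)G^p, then G has a non-inner automorphism of order p. -/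
open Pointwise
open scoped commutatorElement


/-- The subgroup `γ₃(G)G^p` of `G`, where `γ₃(G)` is the third term of the lower
central series and `G^p = ⟨g^p : g ∈ G⟩`. -/
def gammaThreeGp (p : ℕ) (G : Type*) [Group G] : Subgroup G :=
  (⊤ : Subgroup G).lowerCentralSeries 2 ⊔ Subgroup.closure (Set.range fun g : G => g ^ p)

/-- `Ω₁(Z(G)) = ⟨g ∈ Z(G) : g^p = 1⟩` as a subgroup of `G`. -/
def omegaOneCenter (p : ℕ) (G : Type*) [Group G] : Subgroup G :=
  Subgroup.closure {g : G | g ∈ Subgroup.center G ∧ g ^ p = 1}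

section AuxLemmas

variable {p : ℕ} {G : Type*} [Group G]

private lemma pow_mod_p' (x : G) (hx : x ^ p = 1) (a : ℕ) : x ^ (a % p) = x ^ a := by
  conv_rhs => rw [← Nat.div_add_mod a p]
  rw [pow_add, pow_mul, hx, one_pow, one_mul]

private lemma pow_eq_pow_val [NeZero p] (x : G) (hx : x ^ p = 1) (X : ZMod p) (Y : ℕ)
    (h : (Y : ZMod p) = X) : x ^ Y = x ^ X.val := by
  rw [← h, ZMod.val_natCast, pow_mod_p' x hx]

private lemma zpow_eq_pow_val [NeZero p] (x : G) (hx : x ^ p = 1) (k : ℤ) :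
    x ^ k = x ^ ((k : ZMod p)).val := by
  obtain ⟨d, hd⟩ : (p : ℤ) ∣ k - ((k : ZMod p)).val := by
    rw [← ZMod.intCast_zmod_eq_zero_iff_dvd]
    push_cast
    rw [ZMod.natCast_rightInverse ((k : ZMod p))]
    ring
  have hk : k = ((((k : ZMod p)).val : ℕ) : ℤ) + p * d := by linarith [hd]
  conv_lhs => rw [hk]
  rw [zpow_add, zpow_mul, zpow_natCast, zpow_natCast, hx, one_zpow, mul_one]

private lemma mem_of_pow_coprime (hp : p.Prime) (K : Subgroup G) {b : G} (hbp : b ^ p ∈ K)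
    {m : ℕ} (hm : ¬ p ∣ m) (h : b ^ m ∈ K) : b ∈ K := by
  have hcop : Nat.Coprime m p := Nat.Coprime.symm ((Nat.Prime.coprime_iff_not_dvd hp).mpr hm)
  obtain ⟨u, v, huv⟩ := Nat.isCoprime_iff_coprime.mpr hcop
  have hb : b = (b ^ m) ^ u * (b ^ p) ^ v := by
    rw [← zpow_natCast b m, ← zpow_natCast b p, ← zpow_mul, ← zpow_mul, ← zpow_add,
      mul_comm (m : ℤ) u, mul_comm (p : ℤ) v, huv, zpow_one]
  rw [hb]
  exact mul_mem (K.zpow_mem h u) (K.zpow_mem hbp v)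

end AuxLemmas

private lemma construction {p : ℕ} [hp : Fact p.Prime] {G : Type*} [Group G] [Finite G]
    (z b : G) (μ ν : G → ZMod p)
    (hzc : ∀ g : G, Commute z g)
    (hzp : z ^ p = 1) (hbp : b ^ p = 1)
    (hμ : ∀ g h : G, μ (g * h) = μ g + μ h)
    (hν : ∀ g h : G, ν (g * h) = ν g + ν h - μ g * μ h)
    (hswap : ∀ h : G, b * h = h * b * z ^ (-μ h).val)
    (hμb : μ b = 0) (hμz : μ z = 0) (hνb : ν b = 0) (hνz : ν z = 0)
    (hne : ∃ a : G, a * b ^ (μ a).val * z ^ (ν a).val ≠ a) :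
    ∃ θ : MulAut G, orderOf θ = p ∧ ∀ g : G, θ g = g * b ^ (μ g).val * z ^ (ν g).val := by
  haveI : NeZero p := ⟨hp.out.pos.ne'⟩
  have cv : ∀ s : ZMod p, ((s.val : ℕ) : ZMod p) = s := ZMod.natCast_rightInverse
  have zmove : ∀ (j : ℕ) (y w : G), z ^ j * (y * w) = y * (z ^ j * w) := by
    intro j y w
    rw [← mul_assoc, ((hzc y).pow_left j).eq, mul_assoc]
  have hswapn : ∀ (h : G) (n : ℕ), b ^ n * h = h * b ^ n * z ^ ((-μ h).val * n) := by
    intro h n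
    induction n with
    | zero => simp
    | succ n ih =>
      calc b ^ (n + 1) * h = b * (b ^ n * h) := by rw [pow_succ', mul_assoc]
        _ = b * (h * b ^ n * z ^ ((-μ h).val * n)) := by rw [ih]
        _ = (b * h) * (b ^ n * z ^ ((-μ h).val * n)) := by simp only [mul_assoc]
        _ = (h * b * z ^ (-μ h).val) * (b ^ n * z ^ ((-μ h).val * n)) := by rw [hswap h]
        _ = h * b ^ (n + 1) * z ^ ((-μ h).val * (n + 1)) := by
            have hcc : (-μ h).val + (-μ h).val * n = (-μ h).val * (n + 1) := by ring
            rw [pow_succ']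
            simp only [mul_assoc]
            rw [zmove ((-μ h).val) (b ^ n), ← pow_add z, hcc]
  have hmul : ∀ g h : G,
      (g * h) * b ^ (μ (g * h)).val * z ^ (ν (g * h)).val
        = (g * b ^ (μ g).val * z ^ (ν g).val) * (h * b ^ (μ h).val * z ^ (ν h).val) := by
    intro g h
    have key : (g * b ^ (μ g).val * z ^ (ν g).val) * (h * b ^ (μ h).val * z ^ (ν h).val)
        = (g * h) * b ^ ((μ g).val + (μ h).val)
            * z ^ ((-μ h).val * (μ g).val + ((ν g).val + (ν h).val)) := by
      simp only [mul_assoc]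
      rw [zmove ((ν g).val) h, zmove ((ν g).val) (b ^ (μ h).val),
        ← pow_add z ((ν g).val) ((ν h).val)]
      rw [← mul_assoc (b ^ (μ g).val) h, hswapn h ((μ g).val)]
      simp only [mul_assoc]
      rw [zmove ((-μ h).val * (μ g).val) (b ^ (μ h).val),
        ← pow_add z ((-μ h).val * (μ g).val) ((ν g).val + (ν h).val)]
      rw [← mul_assoc (b ^ (μ g).val) (b ^ (μ h).val), ← pow_add b]
    rw [key, hμ, hν]
    rw [pow_eq_pow_val b hbp (μ g + μ h) ((μ g).val + (μ h).val) (by push_cast [cv]; ring)]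
    rw [pow_eq_pow_val z hzp (ν g + ν h - μ g * μ h)
      ((-μ h).val * (μ g).val + ((ν g).val + (ν h).val)) (by push_cast [cv]; ring)]
  let F : G →* G := MonoidHom.mk' (fun g => g * b ^ (μ g).val * z ^ (ν g).val)
    (fun g h => hmul g h)
  have hFb : F b = b := by
    show b * b ^ (μ b).val * z ^ (ν b).val = b
    rw [hμb, hνb, ZMod.val_zero, pow_zero, pow_zero, mul_one, mul_one]
  have hFz : F z = z := by
    show z * b ^ (μ z).val * z ^ (ν z).val = z
    rw [hμz, hνz, ZMod.val_zero, pow_zero, pow_zero, mul_one, mul_one]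
  have hμ1 : μ 1 = 0 := by
    have h11 := hμ 1 1
    rw [one_mul] at h11
    exact (add_eq_left).mp h11.symm
  have hν1 : ν 1 = 0 := by
    have h11 := hν 1 1
    rw [one_mul, hμ1, mul_zero, sub_zero] at h11
    exact (add_eq_left).mp h11.symm
  have hμpow : ∀ (x : G), μ x = 0 → ∀ n : ℕ, μ (x ^ n) = 0 := by
    intro x hx n
    induction n with
    | zero => rw [pow_zero]; exact hμ1
    | succ n ih => rw [pow_succ, hμ, ih, hx, add_zero]
  have hνpow : ∀ (x : G), μ x = 0 → ν x = 0 → ∀ n : ℕ, ν (x ^ n) = 0 := by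
    intro x hx hx' n
    induction n with
    | zero => rw [pow_zero]; exact hν1
    | succ n ih => rw [pow_succ, hν, ih, hx', hx, mul_zero, sub_zero, add_zero]
  have hinj : Function.Injective F := by
    rw [injective_iff_map_eq_one]
    intro g hg
    have hg' : g * b ^ (μ g).val * z ^ (ν g).val = 1 := hg
    have hmg : μ g = 0 := by
      have h1 := congrArg μ hg'
      rw [hμ, hμ, hμpow b hμb, hμpow z hμz, add_zero, add_zero, hμ1] at h1
      exact h1
    rw [hmg, ZMod.val_zero, pow_zero, mul_one] at hg'
    have hng : ν g = 0 := by
      have h1 := congrArg ν hg'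
      rw [hν, hνpow z hμz hνz, hμpow z hμz, mul_zero, sub_zero, add_zero, hν1] at h1
      exact h1
    rw [hng, ZMod.val_zero, pow_zero, mul_one] at hg'
    exact hg'
  have hbij := Finite.injective_iff_bijective.mp hinj
  let θ : MulAut G := MulEquiv.ofBijective F hbij
  have hθapp : ∀ g : G, θ g = g * b ^ (μ g).val * z ^ (ν g).val := fun g => rfl
  have hpow : ∀ (k : ℕ) (g : G),
      (θ ^ k) g = g * b ^ (((k : ℕ) : ZMod p) * μ g).val * z ^ (((k : ℕ) : ZMod p) * ν g).val := by
    intro k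
    induction k with
    | zero =>
      intro g
      simp only [pow_zero, Nat.cast_zero, zero_mul, ZMod.val_zero, mul_one]
      rfl
    | succ k ih =>
      intro g
      rw [pow_succ']
      have happ : (θ * θ ^ k) g = θ ((θ ^ k) g) := rfl
      rw [happ, ih g]
      have expand : θ (g * b ^ (((k : ℕ) : ZMod p) * μ g).val * z ^ (((k : ℕ) : ZMod p) * ν g).val)
          = θ g * (θ b) ^ (((k : ℕ) : ZMod p) * μ g).val
              * (θ z) ^ (((k : ℕ) : ZMod p) * ν g).val := by
        show F _ = F g * (F b) ^ _ * (F z) ^ _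
        rw [map_mul, map_mul, map_pow, map_pow]
      have hθb : θ b = b := hFb
      have hθz : θ z = z := hFz
      rw [expand, hθb, hθz, hθapp g]
      have key : g * b ^ (μ g).val * z ^ (ν g).val * b ^ (((k : ℕ) : ZMod p) * μ g).val
            * z ^ (((k : ℕ) : ZMod p) * ν g).val
          = g * b ^ ((μ g).val + (((k : ℕ) : ZMod p) * μ g).val)
            * z ^ ((ν g).val + (((k : ℕ) : ZMod p) * ν g).val) := by
        simp only [mul_assoc]
        rw [zmove ((ν g).val) (b ^ (((k : ℕ) : ZMod p) * μ g).val), ← pow_add z]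
        rw [← mul_assoc (b ^ (μ g).val) (b ^ (((k : ℕ) : ZMod p) * μ g).val), ← pow_add b]
      rw [key]
      rw [pow_eq_pow_val b hbp (((k + 1 : ℕ) : ZMod p) * μ g)
        ((μ g).val + (((k : ℕ) : ZMod p) * μ g).val) (by push_cast [cv]; ring)]
      rw [pow_eq_pow_val z hzp (((k + 1 : ℕ) : ZMod p) * ν g)
        ((ν g).val + (((k : ℕ) : ZMod p) * ν g).val) (by push_cast [cv]; ring)]
  have hθp : θ ^ p = 1 := by
    apply DFunLike.ext
    intro g
    rw [hpow p g]
    simp [ZMod.natCast_self]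
  have hθne : θ ≠ 1 := by
    obtain ⟨a, ha⟩ := hne
    intro h1
    apply ha
    rw [← hθapp a, h1]
    rfl
  exact ⟨θ, orderOf_eq_prime hθp hθne, hθapp⟩

private lemma pgroup_all_eq_one {p : ℕ} [hp : Fact p.Prime] {Q : Type*} [Group Q]
    [Finite Q] (hQ : IsPGroup p Q)
    (h : Subgroup.closure (Set.range fun g : Q => g ^ p) ⊔ commutator Q = ⊤) :
    ∀ x : Q, x = 1 := by
  classical
  set T := Abelianization Q with hT
  let π : Q →* T := Abelianization.of
  have hsurj : Function.Surjective π := fun t => QuotientGroup.induction_on t fun g => ⟨g, rfl⟩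
  have hpowsurj : Function.Surjective (powMonoidHom p : T →* T) := by
    intro t
    have htop : Subgroup.map π (Subgroup.closure (Set.range fun g : Q => g ^ p) ⊔ commutator Q)
        = ⊤ := by rw [h]; exact Subgroup.map_top_of_surjective _ hsurj
    rw [Subgroup.map_sup] at htop
    have h1 : Subgroup.map π (commutator Q) = ⊥ :=
      (Subgroup.map_eq_bot_iff _).mpr (Abelianization.commutator_subset_ker π)
    have h2 : Subgroup.map π (Subgroup.closure (Set.range fun g : Q => g ^ p))
        ≤ (powMonoidHom p : T →* T).range := by
      rw [MonoidHom.map_closure]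
      apply Subgroup.closure_le _ |>.mpr
      rintro x ⟨y, ⟨g, rfl⟩, rfl⟩
      exact ⟨π g, by simp [powMonoidHom_apply]⟩
    have hT' : (⊤ : Subgroup T) ≤ (powMonoidHom p : T →* T).range := by
      rw [← htop]
      exact sup_le h2 (h1.le.trans bot_le)
    obtain ⟨s, hs⟩ := hT' (Subgroup.mem_top t)
    exact ⟨s, hs⟩
  have hpowinj : Function.Injective (powMonoidHom p : T →* T) :=
    Finite.injective_iff_surjective.mpr hpowsurj
  have hTp : IsPGroup p T := hQ.to_quotient (commutator Q)
  have hTtriv : ∀ t : T, t = 1 := by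
    intro t
    obtain ⟨k, hk⟩ := hTp t
    induction k generalizing t with
    | zero => rw [pow_zero, pow_one] at hk; exact hk
    | succ k ih =>
      have hk' : (t ^ p) ^ p ^ k = 1 := by rw [← pow_mul, ← pow_succ']; exact hk
      have htp : t ^ p = 1 := ih _ hk'
      have heq : (powMonoidHom p : T →* T) t = (powMonoidHom p : T →* T) 1 := by
        simp [powMonoidHom_apply, htp]
      exact hpowinj heq
  have hcomm : commutator Q = ⊤ :=
    (Subgroup.eq_top_iff' _).mpr fun x => (QuotientGroup.eq_one_iff x).mp (hTtriv (π x))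
  have hlcs : ∀ n, (⊤ : Subgroup Q).lowerCentralSeries n = ⊤ := by
    intro n
    induction n with
    | zero => rfl
    | succ n ih => rw [Subgroup.lowerCentralSeries_succ, ih]; exact hcomm
  haveI : Group.IsNilpotent Q := hQ.isNilpotent
  obtain ⟨n, hn⟩ := Subgroup.nilpotent_iff_lowerCentralSeries.mp this
  intro x
  have hx : x ∈ (⊤ : Subgroup Q).lowerCentralSeries n := (hlcs n).symm ▸ Subgroup.mem_top x
  rw [hn] at hx
  exact Subgroup.mem_bot.mp hx

private lemma cyclic_pgroup_dichotomy {p : ℕ} (hp : p.Prime) {H : Type*} [Group H] [Finite H]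
    (hc : IsCyclic H) (hH : IsPGroup p H) (v : H) :
    (∀ u : H, u ∈ Subgroup.zpowers v) ∨ ∃ w : H, w ^ p = v⁻¹ := by
  obtain ⟨c, hgen⟩ := hc.exists_generator
  obtain ⟨k, hk⟩ : ∃ k : ℕ, c ^ k = v := by
    have hv := hgen v
    rw [← mem_powers_iff_mem_zpowers] at hv
    obtain ⟨k, hk⟩ := hv
    exact ⟨k, hk⟩
  by_cases hdvd : p ∣ k
  · right
    obtain ⟨d, rfl⟩ := hdvd
    refine ⟨(c ^ d)⁻¹, ?_⟩
    rw [inv_pow, ← pow_mul, mul_comm d p, hk]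
  · left
    have hord : orderOf c = Nat.card H := orderOf_eq_card_of_forall_mem_zpowers hgen
    have hopow : orderOf v = orderOf c := by
      rw [← hk, orderOf_pow]
      obtain ⟨s, hs⟩ := hH c
      obtain ⟨e, he, hor⟩ := (Nat.dvd_prime_pow hp).mp (orderOf_dvd_of_pow_eq_one hs)
      have hco : Nat.Coprime (p ^ e) k := Nat.Coprime.pow_left e (hp.coprime_iff_not_dvd.mpr hdvd)
      rw [hor, hco.gcd_eq_one, Nat.div_one]
    have htop : Subgroup.zpowers v = ⊤ := by
      apply Subgroup.eq_top_of_card_eq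
      rw [Nat.card_zpowers, hopow, hord]
    intro u
    rw [htop]
    trivial

/-- Let `p` be an odd prime and `G` a finite non-abelian `p`-group with cyclic center.
If `Ω₁(Z(G)) ≰ γ₃(G)G^p`, then `G` has a non-inner automorphism of order `p`. -/
theorem noninner_of_omegaOneCenter_not_le
    {p : ℕ} (hp : p.Prime) (hodd : Odd p) {G : Type*} [Group G] [Finite G]
    (hpG : IsPGroup p G) (hnab : ∃ a b : G, a * b ≠ b * a)
    (hcyc : IsCyclic (Subgroup.center G))
    (h : ¬ omegaOneCenter p G ≤ gammaThreeGp p G) :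
    ∃ φ : MulAut G, orderOf φ = p ∧ ∀ g : G, φ ≠ MulAut.conj g := by
  haveI hpfact : Fact p.Prime := ⟨hp⟩
  haveI : NeZero p := ⟨hp.pos.ne'⟩
  classical
  obtain ⟨z, hzS, hzN⟩ : ∃ z : G, z ∈ {g : G | g ∈ Subgroup.center G ∧ g ^ p = 1}
      ∧ z ∉ gammaThreeGp p G := by
    by_contra hcon
    push_neg at hcon
    exact h ((Subgroup.closure_le _).mpr fun s hs => hcon s hs)
  obtain ⟨hzZ, hzp⟩ := hzS
  have hz1 : z ≠ 1 := fun he => hzN (he ▸ (gammaThreeGp p G).one_mem)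
  have hordz : orderOf z = p := orderOf_eq_prime hzp hz1
  have hzc : ∀ g : G, Commute z g := fun g => (Subgroup.mem_center_iff.mp hzZ g).symm
  have hpowN : ∀ g : G, g ^ p ∈ gammaThreeGp p G := fun g =>
    (le_sup_right : Subgroup.closure (Set.range fun g : G => g ^ p) ≤ gammaThreeGp p G)
      (Subgroup.subset_closure ⟨g, rfl⟩)
  have hγN : (⊤ : Subgroup G).lowerCentralSeries 2 ≤ gammaThreeGp p G := le_sup_left
  haveI hzpn : (Subgroup.zpowers z).Normal := by
    constructor
    intro n hn g
    obtain ⟨k, hk⟩ := Subgroup.mem_zpowers_iff.mp hn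
    have hcalc : g * n * g⁻¹ = z ^ k := by
      rw [← hk, ← ((hzc g).zpow_left k).eq, mul_inv_cancel_right]
    rw [hcalc]
    exact Subgroup.mem_zpowers_iff.mpr ⟨k, rfl⟩
  have hzpow_ne : ∀ s : ZMod p, s ≠ 0 → z ^ s.val ≠ 1 := by
    intro s hs hone
    have hdvd := orderOf_dvd_of_pow_eq_one hone
    rw [hordz] at hdvd
    have hlt : s.val < p := ZMod.val_lt s
    have h0 : s.val = 0 := Nat.eq_zero_of_dvd_of_lt hdvd hlt
    exact hs ((ZMod.val_eq_zero s).mp h0)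
  have hpnotdvd : ∀ s : ZMod p, s ≠ 0 → ¬ p ∣ s.val := by
    intro s hs hdvd
    have hlt : s.val < p := ZMod.val_lt s
    have h0 : s.val = 0 := Nat.eq_zero_of_dvd_of_lt hdvd hlt
    exact hs ((ZMod.val_eq_zero s).mp h0)
  have hzuniq : ∀ i j : ℤ, z ^ i = z ^ j → ((i : ZMod p)) = ((j : ZMod p)) := by
    intro i j hij
    have h1 : z ^ (i - j) = 1 := by
      rw [zpow_sub, hij, mul_inv_cancel]
    have h2 : ((orderOf z : ℤ)) ∣ (i - j) := orderOf_dvd_iff_zpow_eq_one.mpr h1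
    rw [hordz] at h2
    have h3 : ((i - j : ℤ) : ZMod p) = 0 := (ZMod.intCast_zmod_eq_zero_iff_dvd _ p).mpr h2
    push_cast at h3
    linear_combination h3
  set K : Subgroup G := commutator G ⊔ Subgroup.zpowers z with hKdef
  have hzK : Subgroup.zpowers z ≤ K := le_sup_right
  have hcommK : commutator G ≤ K := le_sup_left
  have hzcent_le : Subgroup.zpowers z ≤ Subgroup.center G := Subgroup.zpowers_le.mpr hzZ
  by_cases hex : ∃ b : G, b ^ p = 1 ∧ (∀ g : G, ⁅b, g⁆ ∈ Subgroup.zpowers z)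
      ∧ b ∉ Subgroup.center G ∧ b ∉ K
  · -- Case (ii): a suitable `b` exists
    obtain ⟨b, hb_p, hbcomm, hbZ, hbK⟩ := hex
    have hbrel : ∀ g : G, ∃ k : ℤ, b * g = z ^ k * (g * b) := by
      intro g
      obtain ⟨k, hk⟩ := Subgroup.mem_zpowers_iff.mp (hbcomm g)
      refine ⟨k, ?_⟩
      rw [hk, commutatorElement_def]
      group
    choose κ hκ using hbrel
    set μ : G → ZMod p := fun g => -((κ g : ZMod p)) with hμdef
    have hμeq : ∀ g : G, (-μ g) = ((κ g : ZMod p)) := by intro g; simp [hμdef]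
    have hzmoveZ : ∀ (j : ℤ) (y w : G), y * (z ^ j * w) = z ^ j * (y * w) := by
      intro j y w
      rw [← mul_assoc, ← ((hzc y).zpow_left j).eq, mul_assoc]
    have hμhom : ∀ g h : G, μ (g * h) = μ g + μ h := by
      intro g h
      have hcalc : b * (g * h) = z ^ (κ g + κ h) * (g * h * b) := by
        calc b * (g * h) = (b * g) * h := (mul_assoc _ _ _).symm
          _ = (z ^ κ g * (g * b)) * h := by rw [hκ g]
          _ = z ^ κ g * (g * (b * h)) := by simp only [mul_assoc]
          _ = z ^ κ g * (g * (z ^ κ h * (h * b))) := by rw [hκ h]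
          _ = z ^ κ g * (z ^ κ h * (g * (h * b))) := by rw [hzmoveZ (κ h) g]
          _ = z ^ (κ g + κ h) * (g * h * b) := by
              rw [← mul_assoc, ← zpow_add]
              simp only [mul_assoc]
      have h2 := (hκ (g * h)).symm.trans hcalc
      have h3 : z ^ κ (g * h) = z ^ (κ g + κ h) := mul_right_cancel h2
      have h4 := hzuniq _ _ h3
      push_cast at h4
      simp only [hμdef]
      push_cast
      linear_combination -h4
    have hswap : ∀ g : G, b * g = g * b * z ^ (-μ g).val := by
      intro g
      rw [hμeq g, ← zpow_eq_pow_val z hzp (κ g), hκ g, ((hzc (g * b)).zpow_left (κ g)).eq]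
    have hμb : μ b = 0 := by
      have h3 : z ^ κ b * (b * b) = 1 * (b * b) := by rw [one_mul]; exact (hκ b).symm
      have h2 : z ^ κ b = z ^ (0 : ℤ) := by rw [zpow_zero]; exact mul_right_cancel h3
      have h4 := hzuniq _ _ h2
      push_cast at h4
      simp [hμdef, h4]
    have hμz : μ z = 0 := by
      have h1 := hκ z
      rw [(hzc b).eq] at h1
      have h3 : z ^ κ z * (b * z) = 1 * (b * z) := by rw [one_mul]; exact h1.symm
      have h2 : z ^ κ z = z ^ (0 : ℤ) := by rw [zpow_zero]; exact mul_right_cancel h3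
      have h4 := hzuniq _ _ h2
      push_cast at h4
      simp [hμdef, h4]
    have h2ne : (2 : ZMod p) ≠ 0 := by
      intro h2
      have h2' : ((2 : ℕ) : ZMod p) = 0 := by push_cast; exact h2
      have hdvd := (ZMod.natCast_eq_zero_iff 2 p).mp h2'
      have hp2 : p = 2 := (Nat.prime_dvd_prime_iff_eq hp Nat.prime_two).mp hdvd
      rw [hp2, Nat.odd_iff] at hodd
      omega
    set inv2 : ZMod p := (2 : ZMod p)⁻¹ with hinv2
    have h2inv : (2 : ZMod p) * inv2 = 1 := mul_inv_cancel₀ h2ne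
    set ν : G → ZMod p := fun g => -(μ g * μ g) * inv2 with hνdef
    have hνhom : ∀ g h : G, ν (g * h) = ν g + ν h - μ g * μ h := by
      intro g h
      simp only [hνdef, hμhom]
      linear_combination (-(μ g * μ h)) * h2inv
    have hνb : ν b = 0 := by simp [hνdef, hμb]
    have hνz : ν z = 0 := by simp [hνdef, hμz]
    obtain ⟨a, hba⟩ : ∃ a : G, a * b ≠ b * a := by
      by_contra hcon
      push_neg at hcon
      exact hbZ (Subgroup.mem_center_iff.mpr hcon)
    have hμa : μ a ≠ 0 := by
      intro h0
      have hκa : ((κ a : ZMod p)) = 0 := by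
        have h5 := hμeq a
        rw [h0, neg_zero] at h5
        exact h5.symm
      have hz0 : z ^ κ a = 1 := by
        rw [zpow_eq_pow_val z hzp (κ a), hκa, ZMod.val_zero, pow_zero]
      have h6 := hκ a
      rw [hz0, one_mul] at h6
      exact hba h6.symm
    have hbmK : ∀ n : ℕ, ¬ p ∣ n → b ^ n ∈ K → False := by
      intro n hnd hmem
      exact hbK (mem_of_pow_coprime hp K (by rw [hb_p]; exact K.one_mem) hnd hmem)
    have hne : ∃ a : G, a * b ^ (μ a).val * z ^ (ν a).val ≠ a := by
      refine ⟨a, fun heq => ?_⟩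
      rw [mul_assoc, mul_eq_left] at heq
      have hbm : b ^ (μ a).val ∈ K := by
        have hb' : b ^ (μ a).val = (z ^ (ν a).val)⁻¹ := by
          rw [eq_inv_iff_mul_eq_one]; exact heq
        rw [hb']
        exact inv_mem (hzK (Subgroup.pow_mem _ (Subgroup.mem_zpowers z) _))
      exact hbmK _ (hpnotdvd _ hμa) hbm
    obtain ⟨θ, hθord, hθapp⟩ :=
      construction z b μ ν hzc hzp hb_p hμhom hνhom hswap hμb hμz hνb hνz hne
    refine ⟨θ, hθord, fun x heq => ?_⟩
    have hxg : ∀ g : G, x * g * x⁻¹ = g * b ^ (μ g).val * z ^ (ν g).val := by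
      intro g
      have h5 := hθapp g
      rw [heq, MulAut.conj_apply] at h5
      exact h5
    have hcommel : b ^ (μ a).val * z ^ (ν a).val = ⁅a⁻¹, x⁆ := by
      have hx := hxg a
      rw [commutatorElement_def, inv_inv]
      have h1 : a⁻¹ * (x * a * x⁻¹) = a⁻¹ * (a * b ^ (μ a).val * z ^ (ν a).val) := by rw [hx]
      have h2 : a⁻¹ * (a * b ^ (μ a).val * z ^ (ν a).val) = b ^ (μ a).val * z ^ (ν a).val := by
        group
      have h3 : a⁻¹ * (x * a * x⁻¹) = a⁻¹ * x * a * x⁻¹ := by group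
      rw [← h3, h1, h2]
    have hin : b ^ (μ a).val * z ^ (ν a).val ∈ commutator G := by
      rw [hcommel]
      exact Subgroup.commutator_mem_commutator (Subgroup.mem_top _) (Subgroup.mem_top _)
    have hbm : b ^ (μ a).val ∈ K := by
      have hb' : b ^ (μ a).val = (b ^ (μ a).val * z ^ (ν a).val) * (z ^ (ν a).val)⁻¹ := by group
      rw [hb']
      exact mul_mem (hcommK hin)
        (inv_mem (hzK (Subgroup.pow_mem _ (Subgroup.mem_zpowers z) _)))
    exact hbmK _ (hpnotdvd _ hμa) hbm
  · -- Case (i): no such `b`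
    set M₀ : Subgroup G := commutator G ⊔ Subgroup.closure (Set.range fun g : G => g ^ p)
        ⊔ Subgroup.zpowers z with hM₀def
    have hcommM₀ : commutator G ≤ M₀ := le_sup_left.trans' le_sup_left
    have hpowM₀ : ∀ g : G, g ^ p ∈ M₀ := fun g =>
      (le_sup_left.trans' le_sup_right : Subgroup.closure (Set.range fun g : G => g ^ p) ≤ M₀)
        (Subgroup.subset_closure ⟨g, rfl⟩)
    have hzM₀ : z ∈ M₀ :=
      (le_sup_right : Subgroup.zpowers z ≤ M₀) (Subgroup.mem_zpowers z)
    haveI hM₀n : M₀.Normal := by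
      constructor
      intro n hn g
      have hcalc : g * n * g⁻¹ = ⁅g, n⁆ * n := by rw [commutatorElement_def]; group
      rw [hcalc]
      exact mul_mem (hcommM₀ (Subgroup.commutator_mem_commutator (Subgroup.mem_top _)
        (Subgroup.mem_top _))) hn
    have hM₀ne : M₀ ≠ ⊤ := by
      intro htop
      have hQp : IsPGroup p (G ⧸ Subgroup.center G) := hpG.to_quotient (Subgroup.center G)
      set π : G →* G ⧸ Subgroup.center G := QuotientGroup.mk' (Subgroup.center G) with hπdef
      have hsurj : Function.Surjective π := QuotientGroup.mk'_surjective _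
      have hQtop : Subgroup.closure (Set.range fun g : G ⧸ Subgroup.center G => g ^ p)
          ⊔ commutator (G ⧸ Subgroup.center G) = ⊤ := by
        have h1 : Subgroup.map π M₀ = ⊤ := by
          rw [htop]; exact Subgroup.map_top_of_surjective _ hsurj
        rw [hM₀def, Subgroup.map_sup, Subgroup.map_sup] at h1
        have hc : Subgroup.map π (commutator G) ≤ commutator (G ⧸ Subgroup.center G) := by
          rw [commutator_def, Subgroup.map_commutator]
          rw [Subgroup.map_top_of_surjective _ hsurj]
          rw [commutator_def]
        have hpp : Subgroup.map π (Subgroup.closure (Set.range fun g : G => g ^ p))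
            ≤ Subgroup.closure (Set.range fun g : G ⧸ Subgroup.center G => g ^ p) := by
          rw [MonoidHom.map_closure]
          apply Subgroup.closure_mono
          rintro x ⟨y, ⟨g, rfl⟩, rfl⟩
          exact ⟨π g, (map_pow π g p).symm⟩
        have hzz : Subgroup.map π (Subgroup.zpowers z) = ⊥ := by
          rw [MonoidHom.map_zpowers]
          have hπz : π z = 1 := (QuotientGroup.eq_one_iff z).mpr hzZ
          rw [hπz, Subgroup.zpowers_one_eq_bot]
        rw [eq_top_iff, ← h1]
        refine sup_le (sup_le ?_ ?_) ?_
        · exact hc.trans le_sup_right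
        · exact hpp.trans le_sup_left
        · rw [hzz]; exact bot_le
      have halltriv := pgroup_all_eq_one hQp hQtop
      obtain ⟨a0, b0, hab⟩ := hnab
      apply hab
      have ha : a0 ∈ Subgroup.center G := (QuotientGroup.eq_one_iff a0).mp (halltriv (π a0))
      exact (Subgroup.mem_center_iff.mp ha b0).symm
    obtain ⟨a, haM⟩ : ∃ a : G, a ∉ M₀ := by
      by_contra hcon
      push_neg at hcon
      exact hM₀ne ((Subgroup.eq_top_iff' M₀).mpr hcon)
    -- build a nontrivial homomorphism into `ZMod p` killing `M₀`
    haveI hSn : (Subgroup.map (Abelianization.of (G := G)) M₀).Normal :=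
      Subgroup.normal_of_comm _
    set ψ : G →* (Abelianization G ⧸ Subgroup.map (Abelianization.of (G := G)) M₀) :=
      (QuotientGroup.mk' (Subgroup.map (Abelianization.of (G := G)) M₀)).comp
        (Abelianization.of) with hψdef
    have hψz : ψ z = 1 := by
      apply (QuotientGroup.eq_one_iff _).mpr
      exact Subgroup.mem_map_of_mem _ hzM₀
    have hψa : ψ a ≠ 1 := by
      intro h1
      have h2 : Abelianization.of a ∈ Subgroup.map (Abelianization.of (G := G)) M₀ :=
        (QuotientGroup.eq_one_iff _).mp h1
      obtain ⟨m, hm, hma⟩ := h2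
      have h3 : Abelianization.of (m⁻¹ * a) = 1 := by
        rw [map_mul, map_inv, hma, inv_mul_cancel]
      have h4 : m⁻¹ * a ∈ commutator G := (QuotientGroup.eq_one_iff _).mp h3
      have h5 : a ∈ M₀ := by
        have : a = m * (m⁻¹ * a) := by group
        rw [this]
        exact mul_mem hm (hcommM₀ h4)
      exact haM h5
    have hAp : ∀ y : (Abelianization G ⧸ Subgroup.map (Abelianization.of (G := G)) M₀),
        y ^ p = 1 := by
      intro y
      refine QuotientGroup.induction_on y fun t => ?_
      refine QuotientGroup.induction_on t fun g => ?_
      show (ψ g) ^ p = 1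
      rw [← map_pow]
      apply (QuotientGroup.eq_one_iff _).mpr
      exact Subgroup.mem_map_of_mem _ (hpowM₀ g)
    haveI : Module (ZMod p)
        (Additive (Abelianization G ⧸ Subgroup.map (Abelianization.of (G := G)) M₀)) :=
      AddCommGroup.zmodModule (by
        intro x
        apply Additive.toMul.injective
        rw [toMul_nsmul, toMul_zero]
        exact hAp _)
    obtain ⟨f, hf⟩ : ∃ f : Module.Dual (ZMod p)
        (Additive (Abelianization G ⧸ Subgroup.map (Abelianization.of (G := G)) M₀)),
        f (Additive.ofMul (ψ a)) ≠ 0 := by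
      by_contra hcon
      push_neg at hcon
      have h6 := (Module.forall_dual_apply_eq_zero_iff (ZMod p) (Additive.ofMul (ψ a))).mp hcon
      exact hψa (ofMul_eq_zero.mp h6)
    set χ : G → ZMod p := fun g => f (Additive.ofMul (ψ g)) with hχdef
    have hχhom : ∀ g k : G, χ (g * k) = χ g + χ k := by
      intro g k
      simp only [hχdef]
      rw [map_mul, ofMul_mul, map_add]
    have hχz : χ z = 0 := by
      simp only [hχdef]
      rw [hψz, ofMul_one, map_zero]
    have hχa : χ a ≠ 0 := hf
    have hχ1 : χ 1 = 0 := by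
      have h11 := hχhom 1 1
      rw [one_mul] at h11
      exact (add_eq_left).mp h11.symm
    obtain ⟨θ, hθord, hθapp⟩ := construction z 1 (fun _ => (0 : ZMod p)) χ hzc hzp (one_pow p)
      (by intro g k; simp)
      (by intro g k; rw [hχhom g k]; ring)
      (by intro g; simp)
      rfl rfl hχ1 hχz
      (by
        refine ⟨a, ?_⟩
        simp only [one_pow, mul_one]
        intro heq
        exact hzpow_ne (χ a) hχa (mul_eq_left.mp heq))
    have hθapp' : ∀ g : G, θ g = g * z ^ (χ g).val := by
      intro g
      rw [hθapp g]
      simp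
    refine ⟨θ, hθord, fun x heq => ?_⟩
    have hxg : ∀ g : G, x * g * x⁻¹ = g * z ^ (χ g).val := by
      intro g
      have h5 := hθapp' g
      rw [heq, MulAut.conj_apply] at h5
      exact h5
    have hxZ : x ∉ Subgroup.center G := by
      intro hx
      have h1 := hxg a
      have hcomm' : a * x = x * a := Subgroup.mem_center_iff.mp hx a
      have h2 : x * a * x⁻¹ = a := by
        rw [← hcomm', mul_inv_cancel_right]
      rw [h2] at h1
      exact hzpow_ne (χ a) hχa (mul_eq_left.mp h1.symm)
    have hconj_pow : ∀ (k : ℕ) (g : G), x ^ k * g * (x ^ k)⁻¹ = g * z ^ ((χ g).val * k) := by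
      intro k
      induction k with
      | zero => intro g; simp
      | succ k ih =>
        intro g
        have h1 : x ^ (k + 1) * g * (x ^ (k + 1))⁻¹ = x * (x ^ k * g * (x ^ k)⁻¹) * x⁻¹ := by
          rw [pow_succ']
          group
        rw [h1, ih g]
        have hcw : z ^ ((χ g).val * k) * x⁻¹ = x⁻¹ * z ^ ((χ g).val * k) :=
          ((hzc x⁻¹).pow_left _).eq
        have h2 : x * (g * z ^ ((χ g).val * k)) * x⁻¹
            = (x * g * x⁻¹) * z ^ ((χ g).val * k) := by
          calc x * (g * z ^ ((χ g).val * k)) * x⁻¹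
              = x * g * (z ^ ((χ g).val * k) * x⁻¹) := by group
            _ = x * g * (x⁻¹ * z ^ ((χ g).val * k)) := by rw [hcw]
            _ = (x * g * x⁻¹) * z ^ ((χ g).val * k) := by group
        rw [h2, hxg g, mul_assoc, ← pow_add]
        have h3 : (χ g).val + (χ g).val * k = (χ g).val * (k + 1) := by ring
        rw [h3]
    have hxpZ : x ^ p ∈ Subgroup.center G := by
      apply Subgroup.mem_center_iff.mpr
      intro g
      have h1 := hconj_pow p g
      have h2 : z ^ ((χ g).val * p) = 1 := by
        rw [mul_comm ((χ g).val) p, pow_mul, hzp, one_pow]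
      rw [h2, mul_one] at h1
      have h3 : x ^ p * g = g * x ^ p := by
        calc x ^ p * g = (x ^ p * g * (x ^ p)⁻¹) * x ^ p := by group
          _ = g * x ^ p := by rw [h1]
      exact h3.symm
    rcases cyclic_pgroup_dichotomy hp hcyc (hpG.to_subgroup (Subgroup.center G))
        (⟨x ^ p, hxpZ⟩ : Subgroup.center G) with hall | ⟨w, hw⟩
    · have hz' := hall ⟨z, hzZ⟩
      obtain ⟨t, ht⟩ := Subgroup.mem_zpowers_iff.mp hz'
      have htG : ((x ^ p : G)) ^ t = z := by
        have h5 := congrArg (Subtype.val) ht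
        simpa using h5
      apply hzN
      have hzposs : z = (x ^ t) ^ p := by
        rw [← htG, ← zpow_natCast x p, ← zpow_mul, mul_comm, zpow_mul, zpow_natCast]
      rw [hzposs]
      exact hpowN (x ^ t)
    · have hwc : (w : G) ∈ Subgroup.center G := w.2
      have hwG : (w : G) ^ p = ((x ^ p)⁻¹ : G) := by
        have h5 := congrArg (Subtype.val) hw
        simpa using h5
      set x' : G := x * (w : G) with hx'def
      have hx'conj : ∀ g : G, x' * g * x'⁻¹ = g * z ^ (χ g).val := by
        intro g
        have hgw : (w : G) * g * (w : G)⁻¹ = g := by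
          rw [← Subgroup.mem_center_iff.mp hwc g, mul_inv_cancel_right]
        calc x' * g * x'⁻¹ = x * ((w : G) * g * (w : G)⁻¹) * x⁻¹ := by rw [hx'def]; group
          _ = x * g * x⁻¹ := by rw [hgw]
          _ = g * z ^ (χ g).val := hxg g
      have hx'p : x' ^ p = 1 := by
        have hcxw : Commute x (w : G) := Subgroup.mem_center_iff.mp hwc x
        rw [hx'def, hcxw.mul_pow, hwG, mul_inv_cancel]
      have hx'Z : x' ∉ Subgroup.center G := by
        intro hmem
        apply hxZ
        have hxx : x = x' * (w : G)⁻¹ := by rw [hx'def]; group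
        rw [hxx]
        exact mul_mem hmem (inv_mem hwc)
      have hx'comm : ∀ g : G, ⁅x', g⁆ ∈ Subgroup.zpowers z := by
        intro g
        have hcz : ⁅x', g⁆ = z ^ (χ g).val := by
          rw [commutatorElement_def, hx'conj g, mul_assoc, ((hzc g⁻¹).pow_left _).eq,
            mul_inv_cancel_left]
        rw [hcz]
        exact Subgroup.pow_mem _ (Subgroup.mem_zpowers z) _
      push_neg at hex
      have hx'K : x' ∈ K := hex x' hx'p hx'comm hx'Z
      have hKset : (K : Set G) = (commutator G : Set G) * (Subgroup.zpowers z : Set G) :=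
        Subgroup.mul_normal (commutator G) (Subgroup.zpowers z)
      have hx'mem : x' ∈ (commutator G : Set G) * (Subgroup.zpowers z : Set G) := by
        rw [← hKset]; exact hx'K
      obtain ⟨c, hc, w₂, hw₂, hcw₂⟩ := Set.mem_mul.mp hx'mem
      have hw₂c : ∀ g : G, w₂ * g = g * w₂ :=
        fun g => (Subgroup.mem_center_iff.mp (hzcent_le hw₂) g).symm
      have hfin : z ^ (χ a).val = ⁅c, a⁆ := by
        have h1 : ⁅x', a⁆ = z ^ (χ a).val := by
          rw [commutatorElement_def, hx'conj a, mul_assoc, ((hzc a⁻¹).pow_left _).eq,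
            mul_inv_cancel_left]
        rw [← h1, ← hcw₂]
        rw [commutatorElement_def, commutatorElement_def]
        have h6 : (c * w₂) * a * (c * w₂)⁻¹ * a⁻¹ = c * (w₂ * a * w₂⁻¹) * c⁻¹ * a⁻¹ := by group
        rw [h6, hw₂c a, mul_inv_cancel_right]
      have hγmem : z ^ (χ a).val ∈ (⊤ : Subgroup G).lowerCentralSeries 2 := by
        rw [hfin]
        have hc1 : c ∈ (⊤ : Subgroup G).lowerCentralSeries 1 := by
          rw [Subgroup.top_lowerCentralSeries_one]; exact hc
        show ⁅c, a⁆ ∈ ⁅(⊤ : Subgroup G).lowerCentralSeries 1, (⊤ : Subgroup G)⁆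
        exact Subgroup.commutator_mem_commutator hc1 (Subgroup.mem_top a)
      have hzinN : z ^ (χ a).val ∈ gammaThreeGp p G := hγN hγmem
      exact hzN (mem_of_pow_coprime hp _ (by rw [hzp]; exact (gammaThreeGp p G).one_mem)
        (hpnotdvd _ hχa) hzinN)
end
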